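/- arXiv:2505.21213 — 6 statements merged into one kernel-verified Lean document; each statement's English description precedes it below -/
import Mathlib

section
/- Suppose G_β := E[q₀ x′] is nonsingular. Then E[(z − ζ₀(c)) t] ≠ 0, and the first component α₀ of the unique solution β₀ of the moment condition E[q₀(y − x′β₀)] = 0 satisfies α₀ = E[(z − ζ₀(c)) y] / E[(z − ζ₀(c)) t] = Cov(z − ζ₀(c), y) / Cov(z − ζ₀(c), t), where the covariance identities use that E[z − ζ₀(c)] = 0 and E[(z − ζ₀(c)) r′] = 0_k′. -/
open MeasureTheory ProbabilityTheory Filter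
open scoped BigOperators

/-- Prepend an entry to a real vector (non-dependent `Fin.cons`). -/
def consR {k : ℕ} (a : ℝ) (v : Fin k → ℝ) : Fin (k + 1) → ℝ := Fin.cons a v

/-- Covariance of two real random variables. -/
noncomputable def covR {Ω : Type*} [MeasurableSpace Ω] (P : Measure Ω) (f g : Ω → ℝ) : ℝ :=
  ∫ ω, (f ω - ∫ ω', f ω' ∂P) * (g ω - ∫ ω', g ω' ∂P) ∂P

/-! Pulling σ(c)-measurable factors out of `E[· | c]` shows that the instrument residual
`z − ζ₀(c)` is orthogonal to every integrable function of `c`: to the regressors `r` and to the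
constants. Hence the first row of `G_β` is `(E[(z − ζ₀(c)) t], 0, …, 0)`, so its first entry is
nonzero, and the first moment equation collapses to `E[(z − ζ₀(c)) y] = α₀ E[(z − ζ₀(c)) t]`.
As the residual has mean zero, both expectations are covariances. -/

theorem Matrix.ne_zero_of_det_ne_zero_of_forall_succ_eq_zero {n : ℕ} {R : Type*} [CommRing R]
    {A : Matrix (Fin (n + 1)) (Fin (n + 1)) R} (hA : A.det ≠ 0)
    (hrow : ∀ j : Fin n, A 0 j.succ = 0) : A 0 0 ≠ 0 :=
  fun h0 => hA (Matrix.det_eq_zero_of_row_eq_zero 0 (Fin.cases h0 hrow))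

section Integrals

variable {Ω : Type*} [MeasurableSpace Ω] {μ : Measure Ω}

theorem covR_eq_integral_mul_of_integral_eq_zero {f g : Ω → ℝ} (hf : Integrable f μ)
    (hfg : Integrable (fun ω => f ω * g ω) μ) (hf0 : ∫ ω, f ω ∂μ = 0) :
    covR μ f g = ∫ ω, f ω * g ω ∂μ := by
  have hexpand : ∀ ω, (f ω - ∫ ω', f ω' ∂μ) * (g ω - ∫ ω', g ω' ∂μ)
      = f ω * g ω - (∫ ω', g ω' ∂μ) * f ω := fun ω => by rw [hf0]; ring
  rw [covR, integral_congr_ae (.of_forall hexpand), integral_sub hfg (hf.const_mul _),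
    integral_const_mul, hf0, mul_zero, sub_zero]

theorem integral_mul_sub_sum_consR_mul {k : ℕ} {a y u : Ω → ℝ} {v : Ω → Fin k → ℝ}
    (β : Fin (k + 1) → ℝ) (hay : Integrable (fun ω => a ω * y ω) μ)
    (hau : Integrable (fun ω => a ω * u ω) μ) (hav : ∀ j, Integrable (fun ω => a ω * v ω j) μ) :
    ∫ ω, a ω * (y ω - ∑ j, consR (u ω) (v ω) j * β j) ∂μ =
      ∫ ω, a ω * y ω ∂μ -
        (β 0 * ∫ ω, a ω * u ω ∂μ + ∑ j : Fin k, β j.succ * ∫ ω, a ω * v ω j ∂μ) := by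
  have hexpand : ∀ ω, a ω * (y ω - ∑ j, consR (u ω) (v ω) j * β j) =
      a ω * y ω - (β 0 * (a ω * u ω) + ∑ j : Fin k, β j.succ * (a ω * v ω j)) := fun ω => by
    simp only [consR, Fin.sum_univ_succ, Fin.cons_zero, Fin.cons_succ, mul_sub, mul_add,
      Finset.mul_sum, mul_comm, mul_left_comm, mul_assoc]
  have hsum : Integrable (fun ω => ∑ j : Fin k, β j.succ * (a ω * v ω j)) μ :=
    integrable_finsetSum _ fun j _ => (hav j).const_mul _
  rw [integral_congr_ae (.of_forall hexpand), integral_sub hay ((hau.const_mul _).fun_add hsum),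
    integral_add (hau.const_mul _) hsum, integral_finsetSum _ fun j _ => (hav j).const_mul _]
  simp only [integral_const_mul]

theorem first_coeff_eq_div_of_moment_eq_zero {k : ℕ} {a y u : Ω → ℝ} {v : Ω → Fin k → ℝ}
    {β : Fin (k + 1) → ℝ}
    (hG : (Matrix.of fun i j : Fin (k + 1) =>
      ∫ ω, consR (a ω) (v ω) i * consR (u ω) (v ω) j ∂μ).det ≠ 0)
    (hmom : ∫ ω, a ω * (y ω - ∑ j, consR (u ω) (v ω) j * β j) ∂μ = 0)
    (hay : Integrable (fun ω => a ω * y ω) μ) (hav : ∀ j, Integrable (fun ω => a ω * v ω j) μ)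
    (hav0 : ∀ j, ∫ ω, a ω * v ω j ∂μ = 0) :
    ∫ ω, a ω * u ω ∂μ ≠ 0 ∧ β 0 = (∫ ω, a ω * y ω ∂μ) / ∫ ω, a ω * u ω ∂μ := by
  have hau : ∫ ω, a ω * u ω ∂μ ≠ 0 :=
    Matrix.ne_zero_of_det_ne_zero_of_forall_succ_eq_zero hG (by simpa [consR] using hav0)
  -- `a * u` need not be assumed integrable: a nonzero Bochner integral forces it.
  rw [integral_mul_sub_sum_consR_mul β hay (.of_integral_ne_zero hau) hav] at hmom
  simp only [hav0, mul_zero, Finset.sum_const_zero, add_zero, sub_eq_zero] at hmom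
  exact ⟨hau, by rw [hmom, mul_div_cancel_right₀ _ hau]⟩

end Integrals

theorem integral_sub_mul_eq_zero_of_ae_eq_condExp {Ω : Type*} {m m₀ : MeasurableSpace Ω}
    {μ : Measure Ω} (hm : m ≤ m₀) [SigmaFinite (μ.trim hm)] {X h g : Ω → ℝ}
    (hh : h =ᵐ[μ] μ[X|m]) (hg : StronglyMeasurable[m] g)
    (hgX : Integrable (fun ω => g ω * X ω) μ) (hX : Integrable X μ) :
    ∫ ω, (X ω - h ω) * g ω ∂μ = 0 := by
  have hpull : (fun ω => g ω * μ[X|m] ω) =ᵐ[μ] μ[fun ω => g ω * X ω|m] :=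
    (condExp_mul_of_stronglyMeasurable_left hg hgX hX).symm
  have hexpand : (fun ω => (X ω - h ω) * g ω) =ᵐ[μ] fun ω => g ω * X ω - g ω * μ[X|m] ω := by
    filter_upwards [hh] with ω hω
    rw [hω]; ring
  rw [integral_congr_ae hexpand, integral_sub hgX (integrable_condExp.congr hpull.symm),
    integral_congr_ae hpull, integral_condExp hm, sub_self]

theorem stmt4_general
    {d k : ℕ} {Ω : Type*} [MeasurableSpace Ω] (P : Measure Ω) [IsProbabilityMeasure P]
    (y t z : Ω → ℝ) (c : Ω → Fin d → ℝ) (ρ : (Fin d → ℝ) → Fin k → ℝ)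
    (ζ0 : (Fin d → ℝ) → ℝ) (β0 : Fin (k + 1) → ℝ)
    (hz : Measurable z) (hc : Measurable c)
    (hρ : Measurable ρ)
    (hzbin : ∀ ω, z ω = 0 ∨ z ω = 1)
    (hζ01 : ∀ u, ζ0 u ∈ Set.Icc (0 : ℝ) 1)
    (hcond : (fun ω => ζ0 (c ω)) =ᵐ[P] P[z | MeasurableSpace.comap c inferInstance])
    (hyint : Integrable y P)
    (hrint : Integrable (fun ω => ‖ρ (c ω)‖ ^ 2) P)
    (hG : (Matrix.of fun i j : Fin (k + 1) =>
      ∫ ω, consR (z ω - ζ0 (c ω)) (ρ (c ω)) i * consR (t ω) (ρ (c ω)) j ∂P).det ≠ 0)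
    (hmom : ∀ i, ∫ ω, consR (z ω - ζ0 (c ω)) (ρ (c ω)) i *
      (y ω - ∑ j, consR (t ω) (ρ (c ω)) j * β0 j) ∂P = 0) :
    (∫ ω, (z ω - ζ0 (c ω)) * t ω ∂P) ≠ 0 ∧
    β0 0 = (∫ ω, (z ω - ζ0 (c ω)) * y ω ∂P) / (∫ ω, (z ω - ζ0 (c ω)) * t ω ∂P) ∧
    β0 0 = covR P (fun ω => z ω - ζ0 (c ω)) y / covR P (fun ω => z ω - ζ0 (c ω)) t := by
  have hσ : MeasurableSpace.comap c inferInstance ≤ ‹MeasurableSpace Ω› := hc.comap_le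
  set f : Ω → ℝ := fun ω => z ω - ζ0 (c ω)
  have hz_bdd : ∀ ω, ‖z ω‖ ≤ 1 := fun ω => by rcases hzbin ω with h | h <;> simp [h]
  have hf_bdd : ∀ᵐ ω ∂P, ‖f ω‖ ≤ 1 := .of_forall fun ω => by
    have hz01 : z ω ∈ Set.Icc (0 : ℝ) 1 := by rcases hzbin ω with h | h <;> simp [h]
    exact abs_sub_le_of_nonneg_of_le hz01.1 hz01.2 (hζ01 _).1 (hζ01 _).2
  have hf_meas : AEStronglyMeasurable f P := hz.aestronglyMeasurable.sub
    ((stronglyMeasurable_condExp.mono hσ).aestronglyMeasurable.congr hcond.symm)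
  have hz_int : Integrable z P := .of_bound hz.aestronglyMeasurable 1 (.of_forall hz_bdd)
  have horth : ∀ g : Ω → ℝ, StronglyMeasurable[MeasurableSpace.comap c inferInstance] g →
      Integrable g P → ∫ ω, f ω * g ω ∂P = 0 := fun g hg hg_int =>
    integral_sub_mul_eq_zero_of_ae_eq_condExp hσ hcond hg
      (hg_int.mul_bdd hz.aestronglyMeasurable (.of_forall hz_bdd)) hz_int
  have hr_int : Integrable (fun ω => ρ (c ω)) P :=
    ((memLp_two_iff_integrable_sq_norm (hρ.comp hc).aestronglyMeasurable).2 hrint).integrable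
      one_le_two
  have hfr : ∀ j, ∫ ω, f ω * ρ (c ω) j ∂P = 0 := fun j =>
    horth _ (((measurable_pi_apply j).comp hρ).comp (comap_measurable c)).stronglyMeasurable
      (hr_int.eval j)
  have hfy_int : Integrable (fun ω => f ω * y ω) P := hyint.bdd_mul hf_meas hf_bdd
  obtain ⟨hft, hβ⟩ := first_coeff_eq_div_of_moment_eq_zero hG (hmom 0) hfy_int
    (fun j => (hr_int.eval j).bdd_mul hf_meas hf_bdd) hfr
  have hf_mean : ∫ ω, f ω ∂P = 0 := by
    simpa using horth 1 stronglyMeasurable_const (integrable_const 1)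
  have hf_int : Integrable f P := .of_bound hf_meas 1 hf_bdd
  refine ⟨hft, hβ, ?_⟩
  rwa [covR_eq_integral_mul_of_integral_eq_zero hf_int hfy_int hf_mean,
    covR_eq_integral_mul_of_integral_eq_zero hf_int (.of_integral_ne_zero hft) hf_mean]

/-- If `G_β = E[q₀ x′]` is nonsingular then `E[(z − ζ₀(c)) t] ≠ 0` and the
first component `α₀` of the unique solution `β₀` of `E[q₀(y − x′β₀)] = 0` equals
`E[(z − ζ₀(c)) y]/E[(z − ζ₀(c)) t] = Cov(z − ζ₀(c), y)/Cov(z − ζ₀(c), t)`. -/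
theorem stmt4
    {d k : ℕ} {Ω : Type*} [MeasurableSpace Ω] (P : Measure Ω) [IsProbabilityMeasure P]
    (y t z : Ω → ℝ) (c : Ω → Fin d → ℝ) (ρ : (Fin d → ℝ) → Fin k → ℝ)
    (ζ0 : (Fin d → ℝ) → ℝ) (β0 : Fin (k + 1) → ℝ)
    (hy : Measurable y) (ht : Measurable t) (hz : Measurable z) (hc : Measurable c)
    (hρ : Measurable ρ) (hζ0 : Measurable ζ0)
    (htbin : ∀ ω, t ω = 0 ∨ t ω = 1) (hzbin : ∀ ω, z ω = 0 ∨ z ω = 1)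
    (hζ01 : ∀ u, ζ0 u ∈ Set.Icc (0 : ℝ) 1)
    (hcond : (fun ω => ζ0 (c ω)) =ᵐ[P] P[z | MeasurableSpace.comap c inferInstance])
    (hyint : Integrable y P)
    (hy2int : Integrable (fun ω => (y ω) ^ 2) P)
    (hrint : Integrable (fun ω => ‖ρ (c ω)‖ ^ 2) P)
    (hG : (Matrix.of fun i j : Fin (k + 1) =>
      ∫ ω, consR (z ω - ζ0 (c ω)) (ρ (c ω)) i * consR (t ω) (ρ (c ω)) j ∂P).det ≠ 0)
    (hmom : ∀ i, ∫ ω, consR (z ω - ζ0 (c ω)) (ρ (c ω)) i *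
      (y ω - ∑ j, consR (t ω) (ρ (c ω)) j * β0 j) ∂P = 0) :
    (∫ ω, (z ω - ζ0 (c ω)) * t ω ∂P) ≠ 0 ∧
    β0 0 = (∫ ω, (z ω - ζ0 (c ω)) * y ω ∂P) / (∫ ω, (z ω - ζ0 (c ω)) * t ω ∂P) ∧
    β0 0 = covR P (fun ω => z ω - ζ0 (c ω)) y / covR P (fun ω => z ω - ζ0 (c ω)) t :=
  stmt4_general P y t z c ρ ζ0 β0 hz hc hρ hzbin hζ01 hcond hyint hrint hG hmom
end

section
/- Suppose both G_β := E[q₀ x′] and G_β* := E[q₀* x*′] are nonsingular, and let β₀ = (α₀, γ₀′)′ be the unique solution of E[q₀(y − x′β₀)] = 0 and β₀* = (α₀*, γ₀*′, φ₀)′ be the unique solution of E[q₀*(y − x*′β₀*)] = 0. Then the treatment coefficients coincide: α₀* = α₀, and both equal E[(z − ζ₀(c)) y] / E[(z − ζ₀(c)) t]; that is, the control-function approach and the instrument-residual approach identify the same estimand for the effect of the treatment. -/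
open MeasureTheory ProbabilityTheory Filter
open scoped BigOperators

/-- Append an entry to a real vector (non-dependent `Fin.snoc`). -/
def snocR {k : ℕ} (v : Fin k → ℝ) (a : ℝ) : Fin (k + 1) → ℝ := Fin.snoc v a

lemma key_orth {d : ℕ} {Ω : Type*} [mΩ : MeasurableSpace Ω] (P : Measure Ω) [IsProbabilityMeasure P]
    (z : Ω → ℝ) (c : Ω → Fin d → ℝ) (ζ0 : (Fin d → ℝ) → ℝ) (g : (Fin d → ℝ) → ℝ)
    (hz : Measurable z) (hc : Measurable c) (hζ0 : Measurable ζ0) (hg : Measurable g)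
    (hzbdd : ∀ ω, |z ω| ≤ 1) (hζbdd : ∀ u, |ζ0 u| ≤ 1)
    (hcond : (fun ω => ζ0 (c ω)) =ᵐ[P] P[z | MeasurableSpace.comap c inferInstance])
    (hgint : Integrable (fun ω => g (c ω)) P) :
    ∫ ω, (z ω - ζ0 (c ω)) * g (c ω) ∂P = 0 := by
  set m := MeasurableSpace.comap c inferInstance with hm_def
  have hm : m ≤ mΩ := hc.comap_le
  haveI : SigmaFinite (P.trim hm) := by
    haveI := isFiniteMeasure_trim hm (μ := P)
    infer_instance
  have hcm : @Measurable Ω (Fin d → ℝ) m _ c := fun s hs => ⟨s, hs, rfl⟩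
  have hgm : StronglyMeasurable[m] (fun ω => g (c ω)) := (hg.comp hcm).stronglyMeasurable
  have hzint : Integrable z P :=
    (integrable_const (1:ℝ)).mono' hz.aestronglyMeasurable
      (Filter.Eventually.of_forall fun ω => by simpa using hzbdd ω)
  have hzg_int : Integrable (fun ω => z ω * g (c ω)) P :=
    hgint.bdd_mul hz.aestronglyMeasurable (Filter.Eventually.of_forall fun ω => by simpa using hzbdd ω)
  have hgz_int : Integrable ((fun ω => g (c ω)) * z) P :=
    hzg_int.congr (Filter.Eventually.of_forall fun ω => mul_comm _ _)
  have hζg_int : Integrable (fun ω => ζ0 (c ω) * g (c ω)) P :=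
    hgint.bdd_mul ((hζ0.comp hc).aestronglyMeasurable) (Filter.Eventually.of_forall fun ω => by simpa using hζbdd (c ω))
  have hpull : P[(fun ω => g (c ω)) * z | m] =ᵐ[P] (fun ω => g (c ω)) * P[z | m] :=
    condExp_mul_of_stronglyMeasurable_left hgm hgz_int hzint
  have h1 : ∫ ω, ζ0 (c ω) * g (c ω) ∂P = ∫ ω, z ω * g (c ω) ∂P := by
    have e1 : ∫ ω, ζ0 (c ω) * g (c ω) ∂P = ∫ ω, ((fun ω => g (c ω)) * P[z | m]) ω ∂P := by
      refine integral_congr_ae ?_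
      filter_upwards [hcond] with ω hω
      simp only [Pi.mul_apply]
      rw [hω, mul_comm]
    have e2 : ∫ ω, ((fun ω => g (c ω)) * P[z | m]) ω ∂P
        = ∫ ω, (P[(fun ω => g (c ω)) * z | m]) ω ∂P := (integral_congr_ae hpull).symm
    have e3 : ∫ ω, (P[(fun ω => g (c ω)) * z | m]) ω ∂P
        = ∫ ω, ((fun ω => g (c ω)) * z) ω ∂P := integral_condExp hm
    rw [e1, e2, e3]
    exact integral_congr_ae (Filter.Eventually.of_forall fun ω => by
      simp [Pi.mul_apply, mul_comm])
  simp_rw [sub_mul]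
  rw [integral_sub hzg_int hζg_int, h1, sub_self]

/-- If both `G_β = E[q₀ x′]` and `G_β* = E[q₀* x*′]` are nonsingular, the
treatment coefficients of the instrument-residual and control-function moment conditions
coincide: `α₀* = α₀ = E[(z − ζ₀(c)) y]/E[(z − ζ₀(c)) t]`. -/
theorem stmt5
    {d k : ℕ} {Ω : Type*} [MeasurableSpace Ω] (P : Measure Ω) [IsProbabilityMeasure P]
    (y t z : Ω → ℝ) (c : Ω → Fin d → ℝ) (ρ : (Fin d → ℝ) → Fin k → ℝ)
    (ζ0 : (Fin d → ℝ) → ℝ) (β0 : Fin (k + 1) → ℝ) (β0s : Fin (k + 2) → ℝ)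
    (hy : Measurable y) (ht : Measurable t) (hz : Measurable z) (hc : Measurable c)
    (hρ : Measurable ρ) (hζ0 : Measurable ζ0)
    (htbin : ∀ ω, t ω = 0 ∨ t ω = 1) (hzbin : ∀ ω, z ω = 0 ∨ z ω = 1)
    (hζ01 : ∀ u, ζ0 u ∈ Set.Icc (0 : ℝ) 1)
    (hcond : (fun ω => ζ0 (c ω)) =ᵐ[P] P[z | MeasurableSpace.comap c inferInstance])
    (hyint : Integrable y P)
    (hy2int : Integrable (fun ω => (y ω) ^ 2) P)
    (hrint : Integrable (fun ω => ‖ρ (c ω)‖ ^ 2) P)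
    (hG : (Matrix.of fun i j : Fin (k + 1) =>
      ∫ ω, consR (z ω - ζ0 (c ω)) (ρ (c ω)) i * consR (t ω) (ρ (c ω)) j ∂P).det ≠ 0)
    (hGs : (Matrix.of fun i j : Fin (k + 2) =>
      ∫ ω, consR (z ω) (snocR (ρ (c ω)) (ζ0 (c ω))) i *
        consR (t ω) (snocR (ρ (c ω)) (ζ0 (c ω))) j ∂P).det ≠ 0)
    (hmom : ∀ i, ∫ ω, consR (z ω - ζ0 (c ω)) (ρ (c ω)) i *
      (y ω - ∑ j, consR (t ω) (ρ (c ω)) j * β0 j) ∂P = 0)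
    (hmoms : ∀ i, ∫ ω, consR (z ω) (snocR (ρ (c ω)) (ζ0 (c ω))) i *
      (y ω - ∑ j, consR (t ω) (snocR (ρ (c ω)) (ζ0 (c ω))) j * β0s j) ∂P = 0) :
    β0s 0 = β0 0 ∧
    β0 0 = (∫ ω, (z ω - ζ0 (c ω)) * y ω ∂P) / (∫ ω, (z ω - ζ0 (c ω)) * t ω ∂P) := by
  -- boundedness facts
  have hzb : ∀ ω, |z ω| ≤ 1 := fun ω => by rcases hzbin ω with h | h <;> simp [h]
  have htb : ∀ ω, |t ω| ≤ 1 := fun ω => by rcases htbin ω with h | h <;> simp [h]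
  have hζb : ∀ u, |ζ0 u| ≤ 1 := fun u => by
    have := hζ01 u; rw [Set.mem_Icc] at this; rw [abs_le]; constructor <;> linarith [this.1, this.2]
  have hwb : ∀ ω, |z ω - ζ0 (c ω)| ≤ 1 := fun ω => by
    have h1 := hζ01 (c ω); rw [Set.mem_Icc] at h1
    rcases hzbin ω with h | h <;> rw [abs_le] <;> constructor <;>
      simp [h] <;> linarith [h1.1, h1.2]
  have hwmeas : Measurable (fun ω => z ω - ζ0 (c ω)) := hz.sub (hζ0.comp hc)
  -- integrability helper for bounded functions
  have hbint : ∀ f : Ω → ℝ, Measurable f → (∀ ω, |f ω| ≤ 1) → Integrable f P := by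
    intro f hf hb
    exact (integrable_const (1:ℝ)).mono' hf.aestronglyMeasurable
      (Filter.Eventually.of_forall fun ω => by simpa using hb ω)
  -- integrability of regressors
  have hrj : ∀ j, Integrable (fun ω => ρ (c ω) j) P := by
    intro j
    refine ((integrable_const (1:ℝ)).add hrint).mono'
      ((measurable_pi_apply j).comp (hρ.comp hc)).aestronglyMeasurable
      (Filter.Eventually.of_forall fun ω => ?_)
    have h1 : |ρ (c ω) j| ≤ ‖ρ (c ω)‖ := by
      simpa using norm_le_pi_norm (ρ (c ω)) j
    have h2 : (0:ℝ) ≤ ‖ρ (c ω)‖ := norm_nonneg _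
    simp only [Pi.add_apply, Real.norm_eq_abs]
    nlinarith
  -- integrability of products with w = z - ζ0∘c
  have hwt : Integrable (fun ω => (z ω - ζ0 (c ω)) * t ω) P :=
    (hbint t ht htb).bdd_mul hwmeas.aestronglyMeasurable (Filter.Eventually.of_forall fun ω => by simpa using hwb ω)
  have hwy : Integrable (fun ω => (z ω - ζ0 (c ω)) * y ω) P :=
    hyint.bdd_mul hwmeas.aestronglyMeasurable (Filter.Eventually.of_forall fun ω => by simpa using hwb ω)
  have hwr : ∀ j, Integrable (fun ω => (z ω - ζ0 (c ω)) * ρ (c ω) j) P := fun j =>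
    (hrj j).bdd_mul hwmeas.aestronglyMeasurable (Filter.Eventually.of_forall fun ω => by simpa using hwb ω)
  have hwζ : Integrable (fun ω => (z ω - ζ0 (c ω)) * ζ0 (c ω)) P :=
    (hbint _ (hζ0.comp hc) fun ω => hζb (c ω)).bdd_mul hwmeas.aestronglyMeasurable
      (Filter.Eventually.of_forall fun ω => by simpa using hwb ω)
  -- orthogonality of w to functions of c
  have horr : ∀ j, ∫ ω, (z ω - ζ0 (c ω)) * ρ (c ω) j ∂P = 0 := fun j =>
    key_orth P z c ζ0 (fun u => ρ u j) hz hc hζ0 ((measurable_pi_apply j).comp hρ)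
      hzb hζb hcond (hrj j)
  have horζ : ∫ ω, (z ω - ζ0 (c ω)) * ζ0 (c ω) ∂P = 0 :=
    key_orth P z c ζ0 ζ0 hz hc hζ0 hζ0 hzb hζb hcond
      (hbint _ (hζ0.comp hc) fun ω => hζb (c ω))
  set D := ∫ ω, (z ω - ζ0 (c ω)) * t ω ∂P with hD_def
  set N := ∫ ω, (z ω - ζ0 (c ω)) * y ω ∂P with hN_def
  -- D ≠ 0
  have hD : D ≠ 0 := by
    intro h0
    apply hG
    apply Matrix.det_eq_zero_of_row_eq_zero 0
    intro j
    induction j using Fin.cases with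
    | zero => simpa [consR] using h0
    | succ i => simpa [consR] using horr i
  -- instrument-residual equation: N = β0 0 * D
  have hA : N = β0 0 * D := by
    have h0 := hmom 0
    have hS : ∀ ω, (z ω - ζ0 (c ω)) * (∑ j : Fin k, ρ (c ω) j * β0 j.succ)
        = ∑ j : Fin k, β0 j.succ * ((z ω - ζ0 (c ω)) * ρ (c ω) j) := by
      intro ω
      rw [Finset.mul_sum]
      exact Finset.sum_congr rfl fun j _ => by ring
    have hpt : ∀ ω, consR (z ω - ζ0 (c ω)) (ρ (c ω)) 0 *
        (y ω - ∑ j, consR (t ω) (ρ (c ω)) j * β0 j)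
        = (z ω - ζ0 (c ω)) * y ω - β0 0 * ((z ω - ζ0 (c ω)) * t ω)
          - ∑ j : Fin k, β0 j.succ * ((z ω - ζ0 (c ω)) * ρ (c ω) j) := by
      intro ω
      rw [Fin.sum_univ_succ]
      simp only [consR, Fin.cons_zero, Fin.cons_succ]
      rw [mul_sub, mul_add, hS ω]
      ring
    simp only [hpt] at h0
    have i1 : Integrable (fun ω => β0 0 * ((z ω - ζ0 (c ω)) * t ω)) P := hwt.const_mul _
    have i2 : Integrable (fun ω => (z ω - ζ0 (c ω)) * y ω
        - β0 0 * ((z ω - ζ0 (c ω)) * t ω)) P := hwy.sub i1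
    have i3 : Integrable (fun ω =>
        ∑ j : Fin k, β0 j.succ * ((z ω - ζ0 (c ω)) * ρ (c ω) j)) P :=
      integrable_finset_sum _ fun j _ => (hwr j).const_mul _
    rw [integral_sub i2 i3, integral_sub hwy i1, integral_const_mul _ _,
      integral_finset_sum _ fun j _ => (hwr j).const_mul _] at h0
    have hs0 : ∑ j : Fin k, ∫ ω, β0 j.succ * ((z ω - ζ0 (c ω)) * ρ (c ω) j) ∂P = 0 :=
      Finset.sum_eq_zero fun j _ => by rw [integral_const_mul _ _, horr j, mul_zero]
    rw [hs0, sub_zero, ← hD_def, ← hN_def] at h0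
    linarith [h0]
  -- control-function equation: N = β0s 0 * D
  have hB : N = β0s 0 * D := by
    have hz0 : ∫ ω, z ω * (y ω - ∑ j, consR (t ω) (snocR (ρ (c ω)) (ζ0 (c ω))) j * β0s j) ∂P
        = 0 := by simpa [consR] using hmoms 0
    have hzl : ∫ ω, ζ0 (c ω) *
        (y ω - ∑ j, consR (t ω) (snocR (ρ (c ω)) (ζ0 (c ω))) j * β0s j) ∂P = 0 := by
      have := hmoms (Fin.last (k + 1))
      simpa [consR, snocR, ← Fin.succ_last, Fin.cons_succ, Fin.snoc_last] using this
    -- decompose the (k+2)-sum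
    have hsum : ∀ ω, (∑ j, consR (t ω) (snocR (ρ (c ω)) (ζ0 (c ω))) j * β0s j)
        = t ω * β0s 0 + (∑ i : Fin k, ρ (c ω) i * β0s i.castSucc.succ)
          + ζ0 (c ω) * β0s (Fin.last k).succ := by
      intro ω
      rw [Fin.sum_univ_succ, Fin.sum_univ_castSucc]
      simp only [consR, snocR, Fin.cons_zero, Fin.cons_succ, Fin.snoc_castSucc,
        Fin.snoc_last, add_assoc]
    -- integrability of the residual
    have heint : Integrable (fun ω =>
        y ω - ∑ j, consR (t ω) (snocR (ρ (c ω)) (ζ0 (c ω))) j * β0s j) P := by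
      have e : (fun ω => y ω - ∑ j, consR (t ω) (snocR (ρ (c ω)) (ζ0 (c ω))) j * β0s j)
          = fun ω => y ω - (t ω * β0s 0 + (∑ i : Fin k, ρ (c ω) i * β0s i.castSucc.succ)
            + ζ0 (c ω) * β0s (Fin.last k).succ) := funext fun ω => by rw [hsum ω]
      rw [e]
      refine hyint.sub ?_
      exact (((hbint t ht htb).mul_const _).add
        (integrable_finset_sum _ fun i _ => (hrj i).mul_const _)).add
        ((hbint _ (hζ0.comp hc) fun ω => hζb (c ω)).mul_const _)
    have hcomb : ∫ ω, (z ω - ζ0 (c ω)) *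
        (y ω - ∑ j, consR (t ω) (snocR (ρ (c ω)) (ζ0 (c ω))) j * β0s j) ∂P = 0 := by
      have h1 : Integrable (fun ω => z ω *
          (y ω - ∑ j, consR (t ω) (snocR (ρ (c ω)) (ζ0 (c ω))) j * β0s j)) P :=
        heint.bdd_mul hz.aestronglyMeasurable (Filter.Eventually.of_forall fun ω => by simpa using hzb ω)
      have h2 : Integrable (fun ω => ζ0 (c ω) *
          (y ω - ∑ j, consR (t ω) (snocR (ρ (c ω)) (ζ0 (c ω))) j * β0s j)) P :=
        heint.bdd_mul ((hζ0.comp hc).aestronglyMeasurable)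
          (Filter.Eventually.of_forall fun ω => by simpa using hζb (c ω))
      simp_rw [sub_mul]
      rw [integral_sub h1 h2, hz0, hzl, sub_zero]
    have hS : ∀ ω, (z ω - ζ0 (c ω)) * (∑ i : Fin k, ρ (c ω) i * β0s i.castSucc.succ)
        = ∑ i : Fin k, β0s i.castSucc.succ * ((z ω - ζ0 (c ω)) * ρ (c ω) i) := by
      intro ω
      rw [Finset.mul_sum]
      exact Finset.sum_congr rfl fun i _ => by ring
    have hpt : ∀ ω, (z ω - ζ0 (c ω)) *
        (y ω - ∑ j, consR (t ω) (snocR (ρ (c ω)) (ζ0 (c ω))) j * β0s j)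
        = (z ω - ζ0 (c ω)) * y ω - β0s 0 * ((z ω - ζ0 (c ω)) * t ω)
          - ∑ i : Fin k, β0s i.castSucc.succ * ((z ω - ζ0 (c ω)) * ρ (c ω) i)
          - β0s (Fin.last k).succ * ((z ω - ζ0 (c ω)) * ζ0 (c ω)) := by
      intro ω
      rw [hsum ω, mul_sub, mul_add, mul_add, hS ω]
      ring
    simp only [hpt] at hcomb
    have i1 : Integrable (fun ω => β0s 0 * ((z ω - ζ0 (c ω)) * t ω)) P := hwt.const_mul _
    have i2 : Integrable (fun ω => (z ω - ζ0 (c ω)) * y ω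
        - β0s 0 * ((z ω - ζ0 (c ω)) * t ω)) P := hwy.sub i1
    have i3 : Integrable (fun ω =>
        ∑ i : Fin k, β0s i.castSucc.succ * ((z ω - ζ0 (c ω)) * ρ (c ω) i)) P :=
      integrable_finset_sum _ fun i _ => (hwr i).const_mul _
    have i4 : Integrable (fun ω => (z ω - ζ0 (c ω)) * y ω
        - β0s 0 * ((z ω - ζ0 (c ω)) * t ω)
        - ∑ i : Fin k, β0s i.castSucc.succ * ((z ω - ζ0 (c ω)) * ρ (c ω) i)) P := i2.sub i3
    have i5 : Integrable (fun ω => β0s (Fin.last k).succ * ((z ω - ζ0 (c ω)) * ζ0 (c ω))) P :=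
      hwζ.const_mul _
    rw [integral_sub i4 i5, integral_sub i2 i3, integral_sub hwy i1, integral_const_mul _ _,
      integral_const_mul _ _, integral_finset_sum _ fun i _ => (hwr i).const_mul _] at hcomb
    have hs0 : ∑ i : Fin k,
        ∫ ω, β0s i.castSucc.succ * ((z ω - ζ0 (c ω)) * ρ (c ω) i) ∂P = 0 :=
      Finset.sum_eq_zero fun i _ => by rw [integral_const_mul _ _, horr i, mul_zero]
    rw [hs0, horζ, sub_zero, mul_zero, sub_zero, ← hD_def, ← hN_def] at hcomb
    linarith [hcomb]
  constructor
  · have : β0s 0 * D = β0 0 * D := by rw [← hB, ← hA]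
    exact mul_right_cancel₀ hD this
  · rw [eq_div_iff hD, ← hA]
end

section
/- The instrument-residual moment function is Neyman orthogonal with respect to ζ at (β₀, ζ₀) if and only if the model is correctly specified in the sense that E[y − x′β₀ ∣ c] = 0 almost surely; that is, the Gateaux derivative of s ↦ E[q(ζ₀ + s·h)(y − x′β₀)] at s = 0 is the zero vector of ℝ^{k+1} for every bounded measurable direction h : ℝ^d → ℝ if and only if E[y − x′β₀ ∣ c] = 0 almost surely. -/
open MeasureTheory ProbabilityTheory Filter
open scoped BigOperators

/-- The instrument-residual moment function is Neyman orthogonal with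
respect to `ζ` at `(β₀, ζ₀)` — i.e. the Gateaux derivative of
`s ↦ E[q(ζ₀ + s·h)(y − x′β₀)]` at `s = 0` vanishes for every bounded measurable direction
`h` — if and only if `E[y − x′β₀ ∣ c] = 0` almost surely. -/
theorem stmt8
    {d k : ℕ} {Ω : Type*} [MeasurableSpace Ω] (P : Measure Ω) [IsProbabilityMeasure P]
    (y t z : Ω → ℝ) (c : Ω → Fin d → ℝ) (ρ : (Fin d → ℝ) → Fin k → ℝ)
    (ζ0 : (Fin d → ℝ) → ℝ) (β0 : Fin (k + 1) → ℝ)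
    (hy : Measurable y) (ht : Measurable t) (hz : Measurable z) (hc : Measurable c)
    (hρ : Measurable ρ) (hζ0 : Measurable ζ0)
    (htbin : ∀ ω, t ω = 0 ∨ t ω = 1) (hzbin : ∀ ω, z ω = 0 ∨ z ω = 1)
    (hζ01 : ∀ u, ζ0 u ∈ Set.Icc (0 : ℝ) 1)
    (hcond : (fun ω => ζ0 (c ω)) =ᵐ[P] P[z | MeasurableSpace.comap c inferInstance])
    (hyint : Integrable y P)
    (hrint : Integrable (fun ω => ‖ρ (c ω)‖) P)
    (hεrint : Integrable
      (fun ω => |y ω - ∑ j, consR (t ω) (ρ (c ω)) j * β0 j| * ‖ρ (c ω)‖) P)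
    (hεint : Integrable (fun ω => |y ω - ∑ j, consR (t ω) (ρ (c ω)) j * β0 j|) P)
    (hmom : ∀ i, ∫ ω, consR (z ω - ζ0 (c ω)) (ρ (c ω)) i *
      (y ω - ∑ j, consR (t ω) (ρ (c ω)) j * β0 j) ∂P = 0) :
    (∀ h : (Fin d → ℝ) → ℝ, Measurable h → (∃ M, ∀ u, |h u| ≤ M) →
      ∀ i : Fin (k + 1),
        HasDerivAt
          (fun s : ℝ => ∫ ω, consR (z ω - (ζ0 (c ω) + s * h (c ω))) (ρ (c ω)) i *
            (y ω - ∑ j, consR (t ω) (ρ (c ω)) j * β0 j) ∂P)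
          0 0)
    ↔ P[fun ω => y ω - ∑ j, consR (t ω) (ρ (c ω)) j * β0 j |
        MeasurableSpace.comap c inferInstance] =ᵐ[P] 0 := by
  classical
  have hm : MeasurableSpace.comap c inferInstance ≤ ‹MeasurableSpace Ω› := by
    rintro s ⟨u, hu, rfl⟩; exact hc hu
  set ε : Ω → ℝ := fun ω => y ω - ∑ j, consR (t ω) (ρ (c ω)) j * β0 j with hε_def
  have hεmeas : Measurable ε := by
    apply hy.sub
    exact Finset.measurable_sum _ fun j _ => by
      refine Measurable.mul ?_ measurable_const
      unfold consR
      refine Fin.cases ?_ ?_ j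
      · simpa using ht
      · intro j'
        have hm' : Measurable fun ω => ρ (c ω) j' := (measurable_pi_apply j').comp (hρ.comp hc)
        simpa using hm'
  have hεInt : Integrable ε P := by
    exact (integrable_norm_iff hεmeas.aestronglyMeasurable).mp
      (by simpa [Real.norm_eq_abs] using hεint)
  -- integrability of h(c)·ε for bounded h
  have hbddInt : ∀ (h : (Fin d → ℝ) → ℝ), Measurable h → (∃ M, ∀ u, |h u| ≤ M) →
      Integrable (fun ω => h (c ω) * ε ω) P := by
    intro h hh ⟨M, hM⟩
    exact hεInt.bdd_mul ((hh.comp hc)).aestronglyMeasurable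
      (c := M) (Eventually.of_forall fun ω => by simpa [Real.norm_eq_abs] using hM (c ω))
  have hzζInt : Integrable (fun ω => (z ω - ζ0 (c ω)) * ε ω) P := by
    refine hεInt.bdd_mul ((hz.sub (hζ0.comp hc))).aestronglyMeasurable (c := 2) (Eventually.of_forall fun ω => ?_)
    have h1 := hζ01 (c ω)
    rcases hzbin ω with h | h <;>
      (rw [Real.norm_eq_abs, abs_sub_le_iff]; constructor <;> simp [h] <;> linarith [h1.1, h1.2])
  -- key derivative fact at coordinate 0
  have hderiv0 : ∀ (h : (Fin d → ℝ) → ℝ), Measurable h → (∃ M, ∀ u, |h u| ≤ M) →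
      HasDerivAt
        (fun s : ℝ => ∫ ω, consR (z ω - (ζ0 (c ω) + s * h (c ω))) (ρ (c ω)) (0 : Fin (k+1)) *
          ε ω ∂P)
        (-∫ ω, h (c ω) * ε ω ∂P) 0 := by
    intro h hh hb
    have hint := hbddInt h hh hb
    have heq : ∀ s : ℝ,
        (∫ ω, consR (z ω - (ζ0 (c ω) + s * h (c ω))) (ρ (c ω)) (0 : Fin (k+1)) * ε ω ∂P)
        = (∫ ω, (z ω - ζ0 (c ω)) * ε ω ∂P) - s * ∫ ω, h (c ω) * ε ω ∂P := by
      intro s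
      have : ∀ ω, consR (z ω - (ζ0 (c ω) + s * h (c ω))) (ρ (c ω)) (0 : Fin (k+1)) * ε ω
          = (z ω - ζ0 (c ω)) * ε ω - s * (h (c ω) * ε ω) := by
        intro ω; simp [consR]; ring
      simp_rw [this]
      rw [integral_sub hzζInt (hint.const_mul s), integral_const_mul]
    have h2 : HasDerivAt
        (fun s : ℝ => (∫ ω, (z ω - ζ0 (c ω)) * ε ω ∂P) - s * ∫ ω, h (c ω) * ε ω ∂P)
        (-∫ ω, h (c ω) * ε ω ∂P) 0 := by
      simpa using ((hasDerivAt_id (0:ℝ)).mul_const (∫ ω, h (c ω) * ε ω ∂P)).const_sub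
        (∫ ω, (z ω - ζ0 (c ω)) * ε ω ∂P)
    exact (funext heq) ▸ h2
  constructor
  · intro hL
    have key : ∀ s : Set (Fin d → ℝ), MeasurableSet s → ∫ ω in c ⁻¹' s, ε ω ∂P = 0 := by
      intro s hs
      set h : (Fin d → ℝ) → ℝ := s.indicator (fun _ => 1) with hdef
      have hh : Measurable h := measurable_const.indicator hs
      have hb : ∃ M, ∀ u, |h u| ≤ M := ⟨1, fun u => by
        by_cases hu : u ∈ s <;> simp [hdef, hu]⟩
      have h1 := hderiv0 h hh hb
      have h2 := hL h hh hb 0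
      have h3 : (-∫ ω, h (c ω) * ε ω ∂P) = 0 := h1.unique h2
      have h4 : (fun ω => h (c ω) * ε ω) = (c ⁻¹' s).indicator ε := by
        funext ω; by_cases hω : c ω ∈ s <;> simp [hdef, hω, Set.indicator]
      rw [neg_eq_zero, h4, integral_indicator (hc hs)] at h3
      exact h3
    have : (0 : Ω → ℝ) =ᵐ[P] P[ε | MeasurableSpace.comap c inferInstance] := by
      refine ae_eq_condExp_of_forall_setIntegral_eq hm hεInt
        (fun s _ _ => (integrable_const (0:ℝ)).integrableOn) (fun s hsm _ => ?_)
        (stronglyMeasurable_const.aestronglyMeasurable)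
      obtain ⟨u, hu, rfl⟩ := hsm
      rw [key u hu]; simp
    exact this.symm
  · intro hR h hh hb i
    -- show the integral ∫ h(c) ε = 0
    have hhm : StronglyMeasurable[MeasurableSpace.comap c inferInstance] (fun ω => h (c ω)) := by
      refine Measurable.stronglyMeasurable ?_
      intro s hs
      exact ⟨h ⁻¹' s, hh hs, rfl⟩
    have hzero : ∫ ω, h (c ω) * ε ω ∂P = 0 := by
      have hpull := condExp_mul_of_stronglyMeasurable_left (μ := P) hhm
        (by exact hbddInt h hh hb) hεInt
      have h0 : P[(fun ω => h (c ω)) * ε | MeasurableSpace.comap c inferInstance] =ᵐ[P] 0 := by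
        refine hpull.trans ?_
        filter_upwards [hR] with ω hω
        simp [Pi.mul_apply, hω]
      calc ∫ ω, h (c ω) * ε ω ∂P = ∫ ω, (P[(fun ω => h (c ω)) * ε | MeasurableSpace.comap c inferInstance]) ω ∂P :=
            (integral_condExp (μ := P) (f := (fun ω => h (c ω)) * ε) hm).symm
        _ = 0 := by rw [integral_congr_ae h0]; simp
    refine Fin.cases ?_ ?_ i
    · have := hderiv0 h hh hb
      rwa [hzero, neg_zero] at this
    · intro j
      have : (fun s : ℝ => ∫ ω, consR (z ω - (ζ0 (c ω) + s * h (c ω))) (ρ (c ω)) j.succ *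
          ε ω ∂P) = fun _ => ∫ ω, ρ (c ω) j * ε ω ∂P := by
        funext s; simp [consR]
      rw [this]
      exact hasDerivAt_const 0 _
end

section
/- For every bounded measurable direction h : ℝ^d → ℝ, the perturbed control-function moment M*(s) := E[q*(ζ₀ + s·h) · (y − α₀* t − r′γ₀* − φ₀(ζ₀(c) + s·h(c)))] ∈ ℝ^{k+2} is differentiable at s = 0, and its derivative equals E[h(c) ε*] · e_{k+2} − φ₀ · (E[h(c) z], E[h(c) r′], E[h(c) ζ₀(c)])′, where e_{k+2} := (0_{k+1}′, 1)′ is the last standard basis vector of ℝ^{k+2}; componentwise, the z-component equals −φ₀ E[h(c) z], the r-components equal −φ₀ E[h(c) r], and the last component equals E[h(c) ε*] − φ₀ E[h(c) ζ₀(c)]. -/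
open MeasureTheory ProbabilityTheory Filter
open scoped BigOperators

lemma consR_zero {k : ℕ} (a : ℝ) (v : Fin (k+1) → ℝ) : consR a v 0 = a := rfl

lemma consSnoc_mid {k : ℕ} (a b : ℝ) (v : Fin k → ℝ) (j : Fin k) :
    consR a (snocR v b) (Fin.succ (Fin.castSucc j)) = v j := by
  simp [consR, snocR]

lemma consSnoc_last {k : ℕ} (a b : ℝ) (v : Fin k → ℝ) :
    consR a (snocR v b) (Fin.last (k+1)) = b := by
  rw [← Fin.succ_last]
  simp only [consR, snocR, Fin.cons_succ, Fin.snoc_last]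

lemma E_zero {k : ℕ} : snocR (0 : Fin (k+1) → ℝ) 1 (0 : Fin (k+2)) = 0 := by
  have h : (0 : Fin (k+2)) = Fin.castSucc 0 := rfl
  rw [h, snocR, Fin.snoc_castSucc]
  rfl

lemma E_mid {k : ℕ} (j : Fin k) :
    snocR (0 : Fin (k+1) → ℝ) 1 (Fin.succ (Fin.castSucc j)) = 0 := by
  rw [Fin.succ_castSucc, snocR, Fin.snoc_castSucc]
  rfl

lemma E_last {k : ℕ} : snocR (0 : Fin (k+1) → ℝ) 1 (Fin.last (k+1)) = 1 := by
  rw [snocR, Fin.snoc_last]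

lemma consSnoc_affine {k : ℕ} (a b s : ℝ) (v : Fin k → ℝ) (i : Fin (k+2)) :
    consR a (snocR v (b + s)) i
      = consR a (snocR v b) i + s * snocR (0 : Fin (k+1) → ℝ) 1 i := by
  refine Fin.cases ?_ (fun j => ?_) i
  · rw [consR_zero, consR_zero, E_zero, mul_zero, add_zero]
  · refine Fin.lastCases ?_ (fun j' => ?_) j
    · rw [Fin.succ_last, consSnoc_last, consSnoc_last, E_last, mul_one]
    · rw [consSnoc_mid, consSnoc_mid, E_mid, mul_zero, add_zero]

lemma sum_E {k : ℕ} (β : Fin (k+2) → ℝ) :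
    ∑ j, snocR (0 : Fin (k+1) → ℝ) 1 j * β j = β (Fin.last (k+1)) := by
  rw [Fin.sum_univ_castSucc]
  simp only [snocR, Fin.snoc_castSucc, Pi.zero_apply, zero_mul, Finset.sum_const_zero,
    Fin.snoc_last, one_mul, zero_add]

lemma sum_affine {k : ℕ} (a b s : ℝ) (v : Fin k → ℝ) (β : Fin (k+2) → ℝ) :
    ∑ j, consR a (snocR v (b + s)) j * β j
      = (∑ j, consR a (snocR v b) j * β j) + s * β (Fin.last (k+1)) := by
  simp only [consSnoc_affine, add_mul, Finset.sum_add_distrib, mul_assoc, ← Finset.mul_sum,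
    sum_E]

/-- For every bounded measurable direction `h`, the perturbed
control-function moment `M*(s) := E[q*(ζ₀ + s·h) (y − α₀* t − r′γ₀* − φ₀(ζ₀(c) + s·h(c)))]`
is differentiable at `s = 0` with derivative
`E[h(c) ε*] e_{k+2} − φ₀ (E[h(c) z], E[h(c) r′], E[h(c) ζ₀(c)])′`. -/
theorem stmt9
    {d k : ℕ} {Ω : Type*} [MeasurableSpace Ω] (P : Measure Ω) [IsProbabilityMeasure P]
    (y t z : Ω → ℝ) (c : Ω → Fin d → ℝ) (ρ : (Fin d → ℝ) → Fin k → ℝ)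
    (ζ0 : (Fin d → ℝ) → ℝ) (β0s : Fin (k + 2) → ℝ)
    (hy : Measurable y) (ht : Measurable t) (hz : Measurable z) (hc : Measurable c)
    (hρ : Measurable ρ) (hζ0 : Measurable ζ0)
    (htbin : ∀ ω, t ω = 0 ∨ t ω = 1) (hzbin : ∀ ω, z ω = 0 ∨ z ω = 1)
    (hζ01 : ∀ u, ζ0 u ∈ Set.Icc (0 : ℝ) 1)
    (hcond : (fun ω => ζ0 (c ω)) =ᵐ[P] P[z | MeasurableSpace.comap c inferInstance])
    (hyint : Integrable y P)
    (hyrint : Integrable (fun ω => |y ω| * ‖ρ (c ω)‖) P)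
    (hrint : Integrable (fun ω => ‖ρ (c ω)‖ ^ 2) P)
    (hmom : ∀ i, ∫ ω, consR (z ω) (snocR (ρ (c ω)) (ζ0 (c ω))) i *
      (y ω - ∑ j, consR (t ω) (snocR (ρ (c ω)) (ζ0 (c ω))) j * β0s j) ∂P = 0) :
    ∀ h : (Fin d → ℝ) → ℝ, Measurable h → (∃ M, ∀ u, |h u| ≤ M) →
      ∀ i : Fin (k + 2),
        HasDerivAt
          (fun s : ℝ => ∫ ω, consR (z ω) (snocR (ρ (c ω)) (ζ0 (c ω) + s * h (c ω))) i *
            (y ω - ∑ j, consR (t ω) (snocR (ρ (c ω)) (ζ0 (c ω) + s * h (c ω))) j * β0s j) ∂P)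
          ((∫ ω, h (c ω) *
              (y ω - ∑ j, consR (t ω) (snocR (ρ (c ω)) (ζ0 (c ω))) j * β0s j) ∂P)
              * snocR (0 : Fin (k + 1) → ℝ) 1 i
            - β0s (Fin.last (k + 1)) *
              consR (∫ ω, h (c ω) * z ω ∂P)
                (snocR (fun j => ∫ ω, h (c ω) * ρ (c ω) j ∂P)
                  (∫ ω, h (c ω) * ζ0 (c ω) ∂P)) i)
          0 := by
  intro h hmeas hbd i
  obtain ⟨M, hM⟩ := hbd
  -- pointwise bounds
  have htb : ∀ ω, |t ω| ≤ 1 := fun ω => by rcases htbin ω with h' | h' <;> simp [h']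
  have hzb : ∀ ω, |z ω| ≤ 1 := fun ω => by rcases hzbin ω with h' | h' <;> simp [h']
  have hζb : ∀ ω, |ζ0 (c ω)| ≤ 1 := fun ω =>
    abs_le.2 ⟨by linarith [(hζ01 (c ω)).1], (hζ01 (c ω)).2⟩
  -- measurability
  have mr : Measurable fun ω => ρ (c ω) := hρ.comp hc
  have mrj : ∀ j : Fin k, Measurable fun ω => ρ (c ω) j := fun j =>
    (measurable_pi_apply j).comp mr
  have mrn : Measurable fun ω => ‖ρ (c ω)‖ := mr.norm
  have mζ : Measurable fun ω => ζ0 (c ω) := hζ0.comp hc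
  have mH : Measurable fun ω => h (c ω) := hmeas.comp hc
  have hMbd : ∃ C, ∀ ω, ‖h (c ω)‖ ≤ C :=
    ⟨M, fun ω => by simpa [Real.norm_eq_abs] using hM (c ω)⟩
  -- bounded measurable functions are integrable
  have bddInt : ∀ (f : Ω → ℝ) (C : ℝ), Measurable f → (∀ ω, |f ω| ≤ C) →
      Integrable f P := by
    intro f C hf hC
    exact (integrable_const C).mono' hf.aestronglyMeasurable
      (ae_of_all _ fun ω => by simpa [Real.norm_eq_abs] using hC ω)
  -- integrability of ‖r‖ and of the components
  have int_rn : Integrable (fun ω => ‖ρ (c ω)‖) P := by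
    have hg : Integrable (fun ω => (1 : ℝ) + ‖ρ (c ω)‖ ^ 2) P := (integrable_const 1).add hrint
    refine hg.mono' mrn.aestronglyMeasurable (ae_of_all _ fun ω => ?_)
    have h0 : (0:ℝ) ≤ ‖ρ (c ω)‖ := norm_nonneg _
    rw [Real.norm_eq_abs, abs_of_nonneg h0]
    nlinarith [sq_nonneg (‖ρ (c ω)‖ - 1)]
  have int_rj : ∀ j, Integrable (fun ω => ρ (c ω) j) P := fun j =>
    int_rn.mono' (mrj j).aestronglyMeasurable (ae_of_all _ fun ω =>
      norm_le_pi_norm (ρ (c ω)) j)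
  -- componentwise facts
  have comp_meas : ∀ (f : Ω → ℝ), Measurable f →
      ∀ j : Fin (k+2), Measurable (fun ω => consR (f ω) (snocR (ρ (c ω)) (ζ0 (c ω))) j) := by
    intro f hf j
    refine Fin.cases ?_ (fun j' => ?_) j
    · simpa only [consR_zero] using hf
    · refine Fin.lastCases ?_ (fun j'' => ?_) j'
      · simpa only [Fin.succ_last, consSnoc_last] using mζ
      · simpa only [consSnoc_mid] using mrj j''
  have comp_int : ∀ (f : Ω → ℝ) (C : ℝ), Measurable f → (∀ ω, |f ω| ≤ C) →
      ∀ j : Fin (k+2),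
        Integrable (fun ω => consR (f ω) (snocR (ρ (c ω)) (ζ0 (c ω))) j) P := by
    intro f C hf hC j
    refine Fin.cases ?_ (fun j' => ?_) j
    · simpa only [consR_zero] using bddInt f C hf hC
    · refine Fin.lastCases ?_ (fun j'' => ?_) j'
      · simpa only [Fin.succ_last, consSnoc_last] using bddInt _ 1 mζ hζb
      · simpa only [consSnoc_mid] using int_rj j''
  have comp_bound : ∀ (f : Ω → ℝ), (∀ ω, |f ω| ≤ 1) →
      ∀ (j : Fin (k+2)) (ω : Ω),
        |consR (f ω) (snocR (ρ (c ω)) (ζ0 (c ω))) j| ≤ 1 + ‖ρ (c ω)‖ := by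
    intro f hf j ω
    have h0 : (0:ℝ) ≤ ‖ρ (c ω)‖ := norm_nonneg _
    refine Fin.cases ?_ (fun j' => ?_) j
    · rw [consR_zero]; linarith [hf ω]
    · refine Fin.lastCases ?_ (fun j'' => ?_) j'
      · rw [Fin.succ_last, consSnoc_last]; linarith [hζb ω]
      · rw [consSnoc_mid]
        have h1 := norm_le_pi_norm (ρ (c ω)) j''
        rw [Real.norm_eq_abs] at h1
        linarith
  -- the residual
  have res_meas : Measurable
      (fun ω => y ω - ∑ j, consR (t ω) (snocR (ρ (c ω)) (ζ0 (c ω))) j * β0s j) :=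
    hy.sub (Finset.measurable_sum _ fun j _ => (comp_meas t ht j).mul_const _)
  have int_res : Integrable
      (fun ω => y ω - ∑ j, consR (t ω) (snocR (ρ (c ω)) (ζ0 (c ω))) j * β0s j) P :=
    hyint.sub (integrable_finset_sum _ fun j _ => (comp_int t 1 ht htb j).mul_const _)
  have hK0 : (0:ℝ) ≤ ∑ j, |β0s j| := Finset.sum_nonneg fun j _ => abs_nonneg _
  have res_bound : ∀ ω,
      |y ω - ∑ j, consR (t ω) (snocR (ρ (c ω)) (ζ0 (c ω))) j * β0s j|
        ≤ |y ω| + (∑ j, |β0s j|) * (1 + ‖ρ (c ω)‖) := by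
    intro ω
    have h1 : |∑ j, consR (t ω) (snocR (ρ (c ω)) (ζ0 (c ω))) j * β0s j|
        ≤ (∑ j, |β0s j|) * (1 + ‖ρ (c ω)‖) := by
      calc |∑ j, consR (t ω) (snocR (ρ (c ω)) (ζ0 (c ω))) j * β0s j|
          ≤ ∑ j, |consR (t ω) (snocR (ρ (c ω)) (ζ0 (c ω))) j * β0s j| :=
            Finset.abs_sum_le_sum_abs _ _
        _ ≤ ∑ j, (1 + ‖ρ (c ω)‖) * |β0s j| := by
            refine Finset.sum_le_sum fun j _ => ?_
            rw [abs_mul]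
            exact mul_le_mul_of_nonneg_right (comp_bound t htb j ω) (abs_nonneg _)
        _ = (∑ j, |β0s j|) * (1 + ‖ρ (c ω)‖) := by
            rw [← Finset.mul_sum, mul_comm]
    have h2 : |y ω - ∑ j, consR (t ω) (snocR (ρ (c ω)) (ζ0 (c ω))) j * β0s j|
        ≤ |y ω| + |∑ j, consR (t ω) (snocR (ρ (c ω)) (ζ0 (c ω))) j * β0s j| := by
      rw [sub_eq_add_neg]
      exact (abs_add_le _ _).trans_eq (by rw [abs_neg])
    linarith
  -- integrability of the three coefficient functions
  have int_F0 : Integrable (fun ω => consR (z ω) (snocR (ρ (c ω)) (ζ0 (c ω))) i *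
      (y ω - ∑ j, consR (t ω) (snocR (ρ (c ω)) (ζ0 (c ω))) j * β0s j)) P := by
    have intg : Integrable (fun ω => |y ω| + |y ω| * ‖ρ (c ω)‖
        + (∑ j, |β0s j|) * (1 + 2 * ‖ρ (c ω)‖ + ‖ρ (c ω)‖ ^ 2)) P := by
      exact (hyint.abs.add hyrint).add
        ((((integrable_const 1).add (int_rn.const_mul 2)).add hrint).const_mul _)
    refine intg.mono' ((comp_meas z hz i).mul res_meas).aestronglyMeasurable
      (ae_of_all _ fun ω => ?_)
    have hq := comp_bound z hzb i ω
    have hres := res_bound ω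
    have h0 : (0:ℝ) ≤ ‖ρ (c ω)‖ := norm_nonneg _
    rw [Real.norm_eq_abs, abs_mul]
    nlinarith [abs_nonneg (consR (z ω) (snocR (ρ (c ω)) (ζ0 (c ω))) i),
      abs_nonneg (y ω - ∑ j, consR (t ω) (snocR (ρ (c ω)) (ζ0 (c ω))) j * β0s j),
      abs_nonneg (y ω),
      mul_le_mul hq hres (abs_nonneg _) (by linarith)]
  have int_q0 : Integrable (fun ω => consR (z ω) (snocR (ρ (c ω)) (ζ0 (c ω))) i) P :=
    comp_int z 1 hz hzb i
  have int_F1 : Integrable (fun ω => h (c ω) *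
      (snocR (0 : Fin (k+1) → ℝ) 1 i *
        (y ω - ∑ j, consR (t ω) (snocR (ρ (c ω)) (ζ0 (c ω))) j * β0s j)
        - β0s (Fin.last (k+1)) * consR (z ω) (snocR (ρ (c ω)) (ζ0 (c ω))) i)) P :=
    ((int_res.const_mul _).sub (int_q0.const_mul _)).bdd_mul mH.aestronglyMeasurable (ae_of_all _ hMbd.choose_spec)
  have int_F2 : Integrable (fun ω => h (c ω) * h (c ω) *
      (-(β0s (Fin.last (k+1)) * snocR (0 : Fin (k+1) → ℝ) 1 i))) P := by
    refine bddInt _ (M * M * |β0s (Fin.last (k+1)) * snocR (0 : Fin (k+1) → ℝ) 1 i|)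
      ((mH.mul mH).mul_const _) fun ω => ?_
    have h1 := hM (c ω)
    have h2 : (0:ℝ) ≤ |h (c ω)| := abs_nonneg _
    rw [abs_mul, abs_mul, abs_neg]
    have : |h (c ω)| * |h (c ω)| ≤ M * M := mul_le_mul h1 h1 h2 (le_trans h2 h1)
    exact mul_le_mul_of_nonneg_right this (abs_nonneg _)
  -- the moment function is a quadratic polynomial in s
  have key : ∀ s : ℝ,
      (∫ ω, consR (z ω) (snocR (ρ (c ω)) (ζ0 (c ω) + s * h (c ω))) i *
        (y ω - ∑ j, consR (t ω) (snocR (ρ (c ω)) (ζ0 (c ω) + s * h (c ω))) j * β0s j) ∂P)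
      = (∫ ω, consR (z ω) (snocR (ρ (c ω)) (ζ0 (c ω))) i *
          (y ω - ∑ j, consR (t ω) (snocR (ρ (c ω)) (ζ0 (c ω))) j * β0s j) ∂P)
        + s * (∫ ω, h (c ω) *
            (snocR (0 : Fin (k+1) → ℝ) 1 i *
              (y ω - ∑ j, consR (t ω) (snocR (ρ (c ω)) (ζ0 (c ω))) j * β0s j)
              - β0s (Fin.last (k+1)) * consR (z ω) (snocR (ρ (c ω)) (ζ0 (c ω))) i) ∂P)
        + s ^ 2 * (∫ ω, h (c ω) * h (c ω) *
            (-(β0s (Fin.last (k+1)) * snocR (0 : Fin (k+1) → ℝ) 1 i)) ∂P) := by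
    intro s
    have hfun : (fun ω => consR (z ω) (snocR (ρ (c ω)) (ζ0 (c ω) + s * h (c ω))) i *
        (y ω - ∑ j, consR (t ω) (snocR (ρ (c ω)) (ζ0 (c ω) + s * h (c ω))) j * β0s j))
        = fun ω =>
          consR (z ω) (snocR (ρ (c ω)) (ζ0 (c ω))) i *
            (y ω - ∑ j, consR (t ω) (snocR (ρ (c ω)) (ζ0 (c ω))) j * β0s j)
          + s * (h (c ω) *
              (snocR (0 : Fin (k+1) → ℝ) 1 i *
                (y ω - ∑ j, consR (t ω) (snocR (ρ (c ω)) (ζ0 (c ω))) j * β0s j)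
                - β0s (Fin.last (k+1)) * consR (z ω) (snocR (ρ (c ω)) (ζ0 (c ω))) i))
          + s ^ 2 * (h (c ω) * h (c ω) *
              (-(β0s (Fin.last (k+1)) * snocR (0 : Fin (k+1) → ℝ) 1 i))) := by
      funext ω
      rw [consSnoc_affine, sum_affine]
      ring
    have i12 : Integrable (fun ω => s * (h (c ω) *
        (snocR (0 : Fin (k+1) → ℝ) 1 i *
          (y ω - ∑ j, consR (t ω) (snocR (ρ (c ω)) (ζ0 (c ω))) j * β0s j)
          - β0s (Fin.last (k+1)) * consR (z ω) (snocR (ρ (c ω)) (ζ0 (c ω))) i))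
        + s ^ 2 * (h (c ω) * h (c ω) *
          (-(β0s (Fin.last (k+1)) * snocR (0 : Fin (k+1) → ℝ) 1 i)))) P := by
      exact (int_F1.const_mul s).add (int_F2.const_mul (s^2))
    rw [hfun]
    rw [show (fun ω =>
          consR (z ω) (snocR (ρ (c ω)) (ζ0 (c ω))) i *
            (y ω - ∑ j, consR (t ω) (snocR (ρ (c ω)) (ζ0 (c ω))) j * β0s j)
          + s * (h (c ω) *
              (snocR (0 : Fin (k+1) → ℝ) 1 i *
                (y ω - ∑ j, consR (t ω) (snocR (ρ (c ω)) (ζ0 (c ω))) j * β0s j)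
                - β0s (Fin.last (k+1)) * consR (z ω) (snocR (ρ (c ω)) (ζ0 (c ω))) i))
          + s ^ 2 * (h (c ω) * h (c ω) *
              (-(β0s (Fin.last (k+1)) * snocR (0 : Fin (k+1) → ℝ) 1 i))))
        = fun ω =>
          consR (z ω) (snocR (ρ (c ω)) (ζ0 (c ω))) i *
            (y ω - ∑ j, consR (t ω) (snocR (ρ (c ω)) (ζ0 (c ω))) j * β0s j)
          + (s * (h (c ω) *
              (snocR (0 : Fin (k+1) → ℝ) 1 i *
                (y ω - ∑ j, consR (t ω) (snocR (ρ (c ω)) (ζ0 (c ω))) j * β0s j)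
                - β0s (Fin.last (k+1)) * consR (z ω) (snocR (ρ (c ω)) (ζ0 (c ω))) i))
          + s ^ 2 * (h (c ω) * h (c ω) *
              (-(β0s (Fin.last (k+1)) * snocR (0 : Fin (k+1) → ℝ) 1 i))))
      from funext fun ω => by ring]
    rw [integral_add int_F0 i12,
      integral_add (int_F1.const_mul s) (int_F2.const_mul (s^2)),
      integral_const_mul, integral_const_mul]
    ring
  -- derivative of the polynomial
  have hABC : HasDerivAt (fun s : ℝ =>
      (∫ ω, consR (z ω) (snocR (ρ (c ω)) (ζ0 (c ω))) i *
          (y ω - ∑ j, consR (t ω) (snocR (ρ (c ω)) (ζ0 (c ω))) j * β0s j) ∂P)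
        + s * (∫ ω, h (c ω) *
            (snocR (0 : Fin (k+1) → ℝ) 1 i *
              (y ω - ∑ j, consR (t ω) (snocR (ρ (c ω)) (ζ0 (c ω))) j * β0s j)
              - β0s (Fin.last (k+1)) * consR (z ω) (snocR (ρ (c ω)) (ζ0 (c ω))) i) ∂P)
        + s ^ 2 * (∫ ω, h (c ω) * h (c ω) *
            (-(β0s (Fin.last (k+1)) * snocR (0 : Fin (k+1) → ℝ) 1 i)) ∂P))
      (∫ ω, h (c ω) *
        (snocR (0 : Fin (k+1) → ℝ) 1 i *
          (y ω - ∑ j, consR (t ω) (snocR (ρ (c ω)) (ζ0 (c ω))) j * β0s j)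
          - β0s (Fin.last (k+1)) * consR (z ω) (snocR (ρ (c ω)) (ζ0 (c ω))) i) ∂P)
      0 := by
    have h1 : HasDerivAt (fun s : ℝ => s * (∫ ω, h (c ω) *
        (snocR (0 : Fin (k+1) → ℝ) 1 i *
          (y ω - ∑ j, consR (t ω) (snocR (ρ (c ω)) (ζ0 (c ω))) j * β0s j)
          - β0s (Fin.last (k+1)) * consR (z ω) (snocR (ρ (c ω)) (ζ0 (c ω))) i) ∂P))
        (∫ ω, h (c ω) *
          (snocR (0 : Fin (k+1) → ℝ) 1 i *
            (y ω - ∑ j, consR (t ω) (snocR (ρ (c ω)) (ζ0 (c ω))) j * β0s j)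
            - β0s (Fin.last (k+1)) * consR (z ω) (snocR (ρ (c ω)) (ζ0 (c ω))) i) ∂P) 0 := by
      simpa using (hasDerivAt_id (0:ℝ)).mul_const _
    have h2 : HasDerivAt (fun s : ℝ => s ^ 2 * (∫ ω, h (c ω) * h (c ω) *
        (-(β0s (Fin.last (k+1)) * snocR (0 : Fin (k+1) → ℝ) 1 i)) ∂P)) 0 0 := by
      simpa using (hasDerivAt_pow 2 (0:ℝ)).mul_const (∫ ω, h (c ω) * h (c ω) *
        (-(β0s (Fin.last (k+1)) * snocR (0 : Fin (k+1) → ℝ) 1 i)) ∂P)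
    simpa [Pi.add_def] using ((hasDerivAt_const (0:ℝ) _).add h1).add h2
  -- rewrite the goal function as the polynomial
  have hfeq : (fun s : ℝ => ∫ ω, consR (z ω) (snocR (ρ (c ω)) (ζ0 (c ω) + s * h (c ω))) i *
      (y ω - ∑ j, consR (t ω) (snocR (ρ (c ω)) (ζ0 (c ω) + s * h (c ω))) j * β0s j) ∂P)
      = fun s : ℝ =>
      (∫ ω, consR (z ω) (snocR (ρ (c ω)) (ζ0 (c ω))) i *
          (y ω - ∑ j, consR (t ω) (snocR (ρ (c ω)) (ζ0 (c ω))) j * β0s j) ∂P)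
        + s * (∫ ω, h (c ω) *
            (snocR (0 : Fin (k+1) → ℝ) 1 i *
              (y ω - ∑ j, consR (t ω) (snocR (ρ (c ω)) (ζ0 (c ω))) j * β0s j)
              - β0s (Fin.last (k+1)) * consR (z ω) (snocR (ρ (c ω)) (ζ0 (c ω))) i) ∂P)
        + s ^ 2 * (∫ ω, h (c ω) * h (c ω) *
            (-(β0s (Fin.last (k+1)) * snocR (0 : Fin (k+1) → ℝ) 1 i)) ∂P) := funext key
  rw [hfeq]
  -- it remains to identify the derivative value
  convert hABC using 1
  -- TARGET = B
  have int_Hres : Integrable (fun ω => h (c ω) *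
      (y ω - ∑ j, consR (t ω) (snocR (ρ (c ω)) (ζ0 (c ω))) j * β0s j)) P :=
    int_res.bdd_mul mH.aestronglyMeasurable (ae_of_all _ hMbd.choose_spec)
  have int_Hq : Integrable (fun ω => h (c ω) *
      consR (z ω) (snocR (ρ (c ω)) (ζ0 (c ω))) i) P :=
    int_q0.bdd_mul mH.aestronglyMeasurable (ae_of_all _ hMbd.choose_spec)
  have hQ : (∫ ω, h (c ω) * consR (z ω) (snocR (ρ (c ω)) (ζ0 (c ω))) i ∂P)
      = consR (∫ ω, h (c ω) * z ω ∂P)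
          (snocR (fun j => ∫ ω, h (c ω) * ρ (c ω) j ∂P)
            (∫ ω, h (c ω) * ζ0 (c ω) ∂P)) i := by
    refine Fin.cases ?_ (fun j' => ?_) i
    · simp only [consR_zero]
    · refine Fin.lastCases ?_ (fun j'' => ?_) j'
      · simp only [Fin.succ_last, consSnoc_last]
      · simp only [consSnoc_mid]
  calc (∫ ω, h (c ω) *
        (y ω - ∑ j, consR (t ω) (snocR (ρ (c ω)) (ζ0 (c ω))) j * β0s j) ∂P)
          * snocR (0 : Fin (k + 1) → ℝ) 1 i
        - β0s (Fin.last (k + 1)) *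
          consR (∫ ω, h (c ω) * z ω ∂P)
            (snocR (fun j => ∫ ω, h (c ω) * ρ (c ω) j ∂P)
              (∫ ω, h (c ω) * ζ0 (c ω) ∂P)) i
      = snocR (0 : Fin (k+1) → ℝ) 1 i * (∫ ω, h (c ω) *
          (y ω - ∑ j, consR (t ω) (snocR (ρ (c ω)) (ζ0 (c ω))) j * β0s j) ∂P)
        - β0s (Fin.last (k+1)) * (∫ ω, h (c ω) *
          consR (z ω) (snocR (ρ (c ω)) (ζ0 (c ω))) i ∂P) := by
        rw [hQ]; ring
    _ = ∫ ω, (snocR (0 : Fin (k+1) → ℝ) 1 i * (h (c ω) *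
          (y ω - ∑ j, consR (t ω) (snocR (ρ (c ω)) (ζ0 (c ω))) j * β0s j))
        - β0s (Fin.last (k+1)) * (h (c ω) *
          consR (z ω) (snocR (ρ (c ω)) (ζ0 (c ω))) i)) ∂P := by
        rw [integral_sub (int_Hres.const_mul _) (int_Hq.const_mul _),
          integral_const_mul, integral_const_mul]
    _ = ∫ ω, h (c ω) *
          (snocR (0 : Fin (k+1) → ℝ) 1 i *
            (y ω - ∑ j, consR (t ω) (snocR (ρ (c ω)) (ζ0 (c ω))) j * β0s j)
            - β0s (Fin.last (k+1)) * consR (z ω) (snocR (ρ (c ω)) (ζ0 (c ω))) i) ∂P := by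
        congr 1
        funext ω
        ring
end

section
/- Suppose P(z = 1) > 0. Then the Gateaux derivative of s ↦ E[q*(ζ₀ + s·h) · (y − α₀* t − r′γ₀* − φ₀(ζ₀(c) + s·h(c)))] at s = 0 is the zero vector of ℝ^{k+2} for every bounded measurable direction h : ℝ^d → ℝ if and only if φ₀ = 0 and E[y − x*′β₀* ∣ c] = 0 almost surely; in particular, if φ₀ ≠ 0 then the control-function moment function is not Neyman orthogonal with respect to ζ at (β₀*, ζ₀). -/
open MeasureTheory ProbabilityTheory Filter
open scoped BigOperators

lemma q_shift {k : ℕ} (a : ℝ) (r : Fin k → ℝ) (v v' : ℝ) (i : Fin (k+2)) :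
    consR a (snocR r v') i
      = consR a (snocR r v) i + (v' - v) * (if i = Fin.last (k+1) then 1 else 0) := by
  induction i using Fin.cases with
  | zero =>
    have : (0 : Fin (k+2)) ≠ Fin.last (k+1) := by simp [Fin.ext_iff]
    simp [consR, this]
  | succ j =>
    induction j using Fin.lastCases with
    | last =>
      show consR a (snocR r v') ((Fin.last k).succ) = _
      simp only [consR, snocR, Fin.cons_succ, Fin.snoc_last]
      rw [if_pos (Fin.succ_last k)]
      ring
    | cast m =>
      have hne : (m.castSucc).succ ≠ Fin.last (k+1) := by
        rw [← Fin.succ_last]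
        intro hmm
        exact (Fin.castSucc_lt_last m).ne (Fin.succ_injective _ hmm)
      simp only [consR, snocR, Fin.cons_succ, Fin.snoc_castSucc, if_neg hne]
      ring

lemma sum_shift {k : ℕ} (β : Fin (k+2) → ℝ) (a : ℝ) (r : Fin k → ℝ) (v v' : ℝ) :
    ∑ j, consR a (snocR r v') j * β j
      = (∑ j, consR a (snocR r v) j * β j) + (v' - v) * β (Fin.last (k+1)) := by
  have h1 : ∀ j : Fin (k+2), consR a (snocR r v') j * β j
      = consR a (snocR r v) j * β j + (v' - v) * (if j = Fin.last (k+1) then β j else 0) := by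
    intro j
    rw [q_shift a r v v' j]
    by_cases hj : j = Fin.last (k+1) <;> simp [hj] <;> ring
  simp_rw [h1]
  rw [Finset.sum_add_distrib, ← Finset.mul_sum, Finset.sum_ite_eq' Finset.univ (Fin.last (k+1)) β]
  simp

lemma hasDerivAt_poly (A B C : ℝ) : HasDerivAt (fun s : ℝ => A + s * B + s^2 * C) B 0 := by
  have h1 : HasDerivAt (fun s : ℝ => A) 0 (0:ℝ) := hasDerivAt_const _ _
  have h2 : HasDerivAt (fun s : ℝ => s * B) B (0:ℝ) := hasDerivAt_mul_const B
  have h3 : HasDerivAt (fun s : ℝ => s^2 * C) ((2 * (0:ℝ)^1) * C) (0:ℝ) :=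
    (hasDerivAt_pow 2 (0:ℝ)).mul_const C
  exact ((h1.add h2).add h3).congr_deriv (by simp)

lemma hasDerivAt_integral_poly {Ω : Type*} [MeasurableSpace Ω] (P : Measure Ω)
    (f g e : Ω → ℝ) (hf : Integrable f P) (hg : Integrable g P) (he : Integrable e P) :
    HasDerivAt (fun s : ℝ => ∫ ω, (f ω + s * g ω + s^2 * e ω) ∂P) (∫ ω, g ω ∂P) 0 := by
  have heq : (fun s : ℝ => ∫ ω, (f ω + s * g ω + s^2 * e ω) ∂P)
      = fun s => (∫ ω, f ω ∂P) + s * (∫ ω, g ω ∂P) + s^2 * (∫ ω, e ω ∂P) := by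
    funext s
    have h1 : Integrable (fun ω => f ω + s * g ω) P := hf.add (hg.const_mul s)
    have h2 : Integrable (fun ω => s^2 * e ω) P := he.const_mul (s^2)
    rw [integral_add h1 h2, integral_add hf (hg.const_mul s), integral_const_mul,
      integral_const_mul]
  rw [heq]
  exact hasDerivAt_poly _ _ _

lemma measurable_consSnoc {k : ℕ} {Ω : Type*} [MeasurableSpace Ω]
    {a : Ω → ℝ} {r : Ω → Fin k → ℝ} {v : Ω → ℝ}
    (ha : Measurable a) (hr : Measurable r) (hv : Measurable v) (i : Fin (k+2)) :
    Measurable (fun ω => consR (a ω) (snocR (r ω) (v ω)) i) := by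
  induction i using Fin.cases with
  | zero => simpa [consR] using ha
  | succ j =>
    induction j using Fin.lastCases with
    | last =>
      have : (fun ω => consR (a ω) (snocR (r ω) (v ω)) ((Fin.last k).succ)) = v := by
        funext ω; simp only [consR, snocR]; rw [Fin.cons_succ, Fin.snoc_last]
      rw [this]; exact hv
    | cast m =>
      have : (fun ω => consR (a ω) (snocR (r ω) (v ω)) ((m.castSucc).succ))
          = fun ω => r ω m := by
        funext ω; simp [consR, snocR]
      rw [this]; exact (measurable_pi_apply m).comp hr

lemma abs_consSnoc_le {k : ℕ} (a : ℝ) (r : Fin k → ℝ) (v : ℝ) (i : Fin (k+2)) :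
    |consR a (snocR r v) i| ≤ |a| + ‖r‖ + |v| := by
  have h0 : (0:ℝ) ≤ |a| := abs_nonneg a
  have h1 : (0:ℝ) ≤ ‖r‖ := norm_nonneg r
  have h2 : (0:ℝ) ≤ |v| := abs_nonneg v
  induction i using Fin.cases with
  | zero => simp only [consR, Fin.cons_zero]; linarith
  | succ j =>
    induction j using Fin.lastCases with
    | last =>
      have : consR a (snocR r v) ((Fin.last k).succ) = v := by
        simp only [consR, snocR]; rw [Fin.cons_succ, Fin.snoc_last]
      rw [this]; linarith
    | cast m =>
      have : consR a (snocR r v) ((m.castSucc).succ) = r m := by simp [consR, snocR]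
      rw [this]
      have := norm_le_pi_norm r m
      rw [Real.norm_eq_abs] at this
      linarith

/-- If `P(z = 1) > 0`, the Gateaux derivative of the perturbed
control-function moment at `s = 0` vanishes for every bounded measurable direction `h` if
and only if `φ₀ = 0` and `E[y − x*′β₀* ∣ c] = 0` a.s.; in particular, if `φ₀ ≠ 0` the
control-function moment function is not Neyman orthogonal with respect to `ζ` at
`(β₀*, ζ₀)`. -/
theorem stmt10
    {d k : ℕ} {Ω : Type*} [MeasurableSpace Ω] (P : Measure Ω) [IsProbabilityMeasure P]
    (y t z : Ω → ℝ) (c : Ω → Fin d → ℝ) (ρ : (Fin d → ℝ) → Fin k → ℝ)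
    (ζ0 : (Fin d → ℝ) → ℝ) (β0s : Fin (k + 2) → ℝ)
    (hy : Measurable y) (ht : Measurable t) (hz : Measurable z) (hc : Measurable c)
    (hρ : Measurable ρ) (hζ0 : Measurable ζ0)
    (htbin : ∀ ω, t ω = 0 ∨ t ω = 1) (hzbin : ∀ ω, z ω = 0 ∨ z ω = 1)
    (hζ01 : ∀ u, ζ0 u ∈ Set.Icc (0 : ℝ) 1)
    (hcond : (fun ω => ζ0 (c ω)) =ᵐ[P] P[z | MeasurableSpace.comap c inferInstance])
    (hyint : Integrable y P)
    (hyrint : Integrable (fun ω => |y ω| * ‖ρ (c ω)‖) P)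
    (hrint : Integrable (fun ω => ‖ρ (c ω)‖ ^ 2) P)
    (hmom : ∀ i, ∫ ω, consR (z ω) (snocR (ρ (c ω)) (ζ0 (c ω))) i *
      (y ω - ∑ j, consR (t ω) (snocR (ρ (c ω)) (ζ0 (c ω))) j * β0s j) ∂P = 0)
    (hzpos : 0 < P {ω | z ω = 1}) :
    ((∀ h : (Fin d → ℝ) → ℝ, Measurable h → (∃ M, ∀ u, |h u| ≤ M) →
      ∀ i : Fin (k + 2),
        HasDerivAt
          (fun s : ℝ => ∫ ω, consR (z ω) (snocR (ρ (c ω)) (ζ0 (c ω) + s * h (c ω))) i *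
            (y ω - ∑ j, consR (t ω) (snocR (ρ (c ω)) (ζ0 (c ω) + s * h (c ω))) j * β0s j) ∂P)
          0 0)
      ↔ (β0s (Fin.last (k + 1)) = 0 ∧
          P[fun ω => y ω - ∑ j, consR (t ω) (snocR (ρ (c ω)) (ζ0 (c ω))) j * β0s j |
            MeasurableSpace.comap c inferInstance] =ᵐ[P] 0))
    ∧ (β0s (Fin.last (k + 1)) ≠ 0 →
        ¬ (∀ h : (Fin d → ℝ) → ℝ, Measurable h → (∃ M, ∀ u, |h u| ≤ M) →
          ∀ i : Fin (k + 2),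
            HasDerivAt
              (fun s : ℝ => ∫ ω, consR (z ω) (snocR (ρ (c ω)) (ζ0 (c ω) + s * h (c ω))) i *
                (y ω - ∑ j, consR (t ω) (snocR (ρ (c ω)) (ζ0 (c ω) + s * h (c ω))) j * β0s j)
                  ∂P)
              0 0)) := by
  have hm : MeasurableSpace.comap c inferInstance ≤ ‹MeasurableSpace Ω› := hc.comap_le
  set φ := β0s (Fin.last (k + 1)) with hφdef
  set ε : Ω → ℝ := fun ω => y ω - ∑ j, consR (t ω) (snocR (ρ (c ω)) (ζ0 (c ω))) j * β0s j
    with hεdef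
  set Q : Fin (k + 2) → Ω → ℝ := fun i ω => consR (z ω) (snocR (ρ (c ω)) (ζ0 (c ω))) i
    with hQdef
  -- basic measurability
  have hrm : Measurable (fun ω => ρ (c ω)) := hρ.comp hc
  have hζm : Measurable (fun ω => ζ0 (c ω)) := hζ0.comp hc
  have hQmeas : ∀ i, Measurable (Q i) := fun i => measurable_consSnoc hz hrm hζm i
  have hXmeas : ∀ i, Measurable (fun ω => consR (t ω) (snocR (ρ (c ω)) (ζ0 (c ω))) i) :=
    fun i => measurable_consSnoc ht hrm hζm i
  have hεmeas : Measurable ε := by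
    rw [hεdef]
    exact hy.sub (Finset.measurable_sum _ fun j _ => (hXmeas j).mul measurable_const)
  -- constants and pointwise bounds
  set Cβ := ∑ j, |β0s j| with hCβdef
  have hCβ : 0 ≤ Cβ := Finset.sum_nonneg fun j _ => abs_nonneg _
  have hz1 : ∀ ω, |z ω| ≤ 1 := fun ω => by rcases hzbin ω with h | h <;> rw [h] <;> norm_num
  have ht1 : ∀ ω, |t ω| ≤ 1 := fun ω => by rcases htbin ω with h | h <;> rw [h] <;> norm_num
  have hζ1 : ∀ ω, |ζ0 (c ω)| ≤ 1 := fun ω => by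
    rcases hζ01 (c ω) with ⟨h0, h1⟩; rw [abs_le]; constructor <;> linarith
  have hQbd : ∀ i ω, |Q i ω| ≤ 2 + ‖ρ (c ω)‖ := by
    intro i ω
    have := abs_consSnoc_le (z ω) (ρ (c ω)) (ζ0 (c ω)) i
    rw [hQdef]
    have h1 := hz1 ω; have h2 := hζ1 ω
    calc |consR (z ω) (snocR (ρ (c ω)) (ζ0 (c ω))) i| ≤ |z ω| + ‖ρ (c ω)‖ + |ζ0 (c ω)| := this
      _ ≤ 2 + ‖ρ (c ω)‖ := by linarith
  have hεbd : ∀ ω, |ε ω| ≤ |y ω| + Cβ * (2 + ‖ρ (c ω)‖) := by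
    intro ω
    have hs : |∑ j, consR (t ω) (snocR (ρ (c ω)) (ζ0 (c ω))) j * β0s j|
        ≤ Cβ * (2 + ‖ρ (c ω)‖) := by
      calc |∑ j, consR (t ω) (snocR (ρ (c ω)) (ζ0 (c ω))) j * β0s j|
          ≤ ∑ j, |consR (t ω) (snocR (ρ (c ω)) (ζ0 (c ω))) j * β0s j| :=
            Finset.abs_sum_le_sum_abs _ _
        _ ≤ ∑ j : Fin (k+2), (2 + ‖ρ (c ω)‖) * |β0s j| := by
            refine Finset.sum_le_sum fun j _ => ?_
            rw [abs_mul]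
            refine mul_le_mul_of_nonneg_right ?_ (abs_nonneg _)
            have := abs_consSnoc_le (t ω) (ρ (c ω)) (ζ0 (c ω)) j
            have h1 := ht1 ω; have h2 := hζ1 ω
            linarith
        _ = Cβ * (2 + ‖ρ (c ω)‖) := by rw [← Finset.mul_sum, hCβdef, mul_comm]
    rw [hεdef]
    calc |y ω - ∑ j, consR (t ω) (snocR (ρ (c ω)) (ζ0 (c ω))) j * β0s j|
        ≤ |y ω| + |∑ j, consR (t ω) (snocR (ρ (c ω)) (ζ0 (c ω))) j * β0s j| := abs_sub _ _
      _ ≤ |y ω| + Cβ * (2 + ‖ρ (c ω)‖) := by linarith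
  -- integrability
  have hεint : Integrable ε P := by
    refine Integrable.mono' (g := fun ω => |y ω| + Cβ * (3 + ‖ρ (c ω)‖^2))
      ((hyint.abs).add (((integrable_const 3).add hrint).const_mul Cβ))
      hεmeas.aestronglyMeasurable (ae_of_all _ fun ω => ?_)
    rw [Real.norm_eq_abs]
    have h1 := hεbd ω
    have h2 : (0:ℝ) ≤ ‖ρ (c ω)‖ := norm_nonneg _
    nlinarith [sq_nonneg (‖ρ (c ω)‖ - 1), mul_nonneg hCβ (sq_nonneg (‖ρ (c ω)‖ - 1))]
  have hQεint : ∀ i, Integrable (fun ω => Q i ω * ε ω) P := by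
    intro i
    refine Integrable.mono'
      (g := fun ω => 2 * |y ω| + |y ω| * ‖ρ (c ω)‖ + Cβ * (8 + 2 * ‖ρ (c ω)‖^2))
      (((hyint.abs.const_mul 2).add hyrint).add
        (((integrable_const 8).add (hrint.const_mul 2)).const_mul Cβ))
      ((hQmeas i).mul hεmeas).aestronglyMeasurable (ae_of_all _ fun ω => ?_)
    rw [Real.norm_eq_abs, abs_mul]
    have h1 := hQbd i ω
    have h2 := hεbd ω
    have h3 : (0:ℝ) ≤ ‖ρ (c ω)‖ := norm_nonneg _
    have h4 : (0:ℝ) ≤ |ε ω| := abs_nonneg _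
    have h5 : (0:ℝ) ≤ |Q i ω| := abs_nonneg _
    have h6 : (0:ℝ) ≤ |y ω| := abs_nonneg _
    nlinarith [mul_le_mul h1 h2 h4 (by linarith : (0:ℝ) ≤ 2 + ‖ρ (c ω)‖),
      mul_nonneg hCβ (sq_nonneg (‖ρ (c ω)‖ - 2))]
  have hQint : ∀ i, Integrable (Q i) P := by
    intro i
    refine Integrable.mono' (g := fun ω => 3 + ‖ρ (c ω)‖^2)
      ((integrable_const 3).add hrint) (hQmeas i).aestronglyMeasurable
      (ae_of_all _ fun ω => ?_)
    rw [Real.norm_eq_abs]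
    have h1 := hQbd i ω
    nlinarith [sq_nonneg (‖ρ (c ω)‖ - 1)]
  -- the key derivative computation
  have key : ∀ h : (Fin d → ℝ) → ℝ, Measurable h → ∀ M : ℝ, (∀ u, |h u| ≤ M) →
      ∀ i : Fin (k + 2),
      HasDerivAt
        (fun s : ℝ => ∫ ω, consR (z ω) (snocR (ρ (c ω)) (ζ0 (c ω) + s * h (c ω))) i *
          (y ω - ∑ j, consR (t ω) (snocR (ρ (c ω)) (ζ0 (c ω) + s * h (c ω))) j * β0s j) ∂P)
        (∫ ω, ((if i = Fin.last (k+1) then (1:ℝ) else 0) * (h (c ω) * ε ω)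
          - φ * (h (c ω) * Q i ω)) ∂P) 0 := by
    intro h hhm M hM i
    have hM0 : 0 ≤ M := le_trans (abs_nonneg _) (hM 0)
    have hhc : Measurable (fun ω => h (c ω)) := hhm.comp hc
    have hhcint : Integrable (fun ω => h (c ω)) P := by
      refine Integrable.mono' (integrable_const M) hhc.aestronglyMeasurable
        (ae_of_all _ fun ω => ?_)
      rw [Real.norm_eq_abs]; exact hM _
    have hhεint : Integrable (fun ω => h (c ω) * ε ω) P :=
      hεint.bdd_mul hhc.aestronglyMeasurable (ae_of_all _ fun ω => by rw [Real.norm_eq_abs]; exact hM _)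
    have hQhint : Integrable (fun ω => h (c ω) * Q i ω) P :=
      (hQint i).bdd_mul hhc.aestronglyMeasurable
        (ae_of_all _ fun ω => by rw [Real.norm_eq_abs]; exact hM _)
    have hh2int : Integrable (fun ω => h (c ω) * h (c ω)) P :=
      hhcint.bdd_mul hhc.aestronglyMeasurable
        (ae_of_all _ fun ω => by rw [Real.norm_eq_abs]; exact hM _)
    have hpt : ∀ (s : ℝ) (ω : Ω),
        consR (z ω) (snocR (ρ (c ω)) (ζ0 (c ω) + s * h (c ω))) i *
          (y ω - ∑ j, consR (t ω) (snocR (ρ (c ω)) (ζ0 (c ω) + s * h (c ω))) j * β0s j)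
        = Q i ω * ε ω
          + s * ((if i = Fin.last (k+1) then (1:ℝ) else 0) * (h (c ω) * ε ω)
              - φ * (h (c ω) * Q i ω))
          + s^2 * (-((if i = Fin.last (k+1) then (1:ℝ) else 0) * φ
              * (h (c ω) * h (c ω)))) := by
      intro s ω
      rw [q_shift (z ω) (ρ (c ω)) (ζ0 (c ω)) (ζ0 (c ω) + s * h (c ω)) i,
        sum_shift β0s (t ω) (ρ (c ω)) (ζ0 (c ω)) (ζ0 (c ω) + s * h (c ω))]
      simp only [hQdef, hεdef, hφdef, add_sub_cancel_left]
      ring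
    have heq : (fun s : ℝ => ∫ ω, consR (z ω) (snocR (ρ (c ω)) (ζ0 (c ω) + s * h (c ω))) i *
          (y ω - ∑ j, consR (t ω) (snocR (ρ (c ω)) (ζ0 (c ω) + s * h (c ω))) j * β0s j) ∂P)
        = fun s : ℝ => ∫ ω, (Q i ω * ε ω
          + s * ((if i = Fin.last (k+1) then (1:ℝ) else 0) * (h (c ω) * ε ω)
              - φ * (h (c ω) * Q i ω))
          + s^2 * (-((if i = Fin.last (k+1) then (1:ℝ) else 0) * φ
              * (h (c ω) * h (c ω))))) ∂P := by
      funext s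
      exact integral_congr_ae (ae_of_all _ (hpt s))
    rw [heq]
    exact hasDerivAt_integral_poly P _ _ _ (hQεint i)
      ((hhεint.const_mul _).sub (hQhint.const_mul φ))
      ((hh2int.const_mul _).neg)
  -- positivity of the integral of z
  have hzint : Integrable z P := by
    refine Integrable.mono' (integrable_const 1) hz.aestronglyMeasurable
      (ae_of_all _ fun ω => ?_)
    rw [Real.norm_eq_abs]; exact hz1 ω
  have hzintpos : 0 < ∫ ω, z ω ∂P := by
    have hznn : (0 : Ω → ℝ) ≤ z := fun ω => by rcases hzbin ω with hh | hh <;> simp [hh]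
    rw [integral_pos_iff_support_of_nonneg hznn hzint]
    have hsupp : Function.support z = {ω | z ω = 1} := by
      ext ω; rcases hzbin ω with hh | hh <;> simp [Function.mem_support, hh]
    rw [hsupp]; exact hzpos
  -- forward implication
  have fwd : (∀ h : (Fin d → ℝ) → ℝ, Measurable h → (∃ M, ∀ u, |h u| ≤ M) →
      ∀ i : Fin (k + 2),
        HasDerivAt
          (fun s : ℝ => ∫ ω, consR (z ω) (snocR (ρ (c ω)) (ζ0 (c ω) + s * h (c ω))) i *
            (y ω - ∑ j, consR (t ω) (snocR (ρ (c ω)) (ζ0 (c ω) + s * h (c ω))) j * β0s j) ∂P)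
          0 0) →
      (φ = 0 ∧ P[ε | MeasurableSpace.comap c inferInstance] =ᵐ[P] 0) := by
    intro H
    have hφ0 : φ = 0 := by
      have h1 := key (fun _ => 1) measurable_const 1 (fun u => by norm_num) 0
      have h2 := H (fun _ => 1) measurable_const ⟨1, fun u => by norm_num⟩ 0
      have h3 : (∫ ω, ((if (0 : Fin (k+2)) = Fin.last (k+1) then (1:ℝ) else 0) * ((1:ℝ) * ε ω)
          - φ * ((1:ℝ) * Q 0 ω)) ∂P) = 0 := h1.unique h2
      have hne : (0 : Fin (k+2)) ≠ Fin.last (k+1) := by simp [Fin.ext_iff]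
      have hQ0 : ∀ ω, Q 0 ω = z ω := fun ω => by simp [hQdef, consR]
      have h5 : ∀ ω, ((if (0 : Fin (k+2)) = Fin.last (k+1) then (1:ℝ) else 0) * ((1:ℝ) * ε ω)
          - φ * ((1:ℝ) * Q 0 ω)) = -(φ * z ω) := by
        intro ω; rw [hQ0 ω, if_neg hne]; ring
      rw [show (∫ ω, ((if (0 : Fin (k+2)) = Fin.last (k+1) then (1:ℝ) else 0) * ((1:ℝ) * ε ω)
          - φ * ((1:ℝ) * Q 0 ω)) ∂P) = ∫ ω, -(φ * z ω) ∂P from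
          integral_congr_ae (ae_of_all _ h5), integral_neg, integral_const_mul,
        neg_eq_zero] at h3
      exact (mul_eq_zero.mp h3).resolve_right hzintpos.ne'
    refine ⟨hφ0, ?_⟩
    refine (ae_eq_condExp_of_forall_setIntegral_eq hm hεint
      (fun s _ _ => (integrable_const (0:ℝ)).integrableOn)
      (fun s hs _ => ?_) ?_).symm
    swap
    · exact (stronglyMeasurable_const :
        StronglyMeasurable[MeasurableSpace.comap c inferInstance]
          (fun _ : Ω => (0:ℝ))).aestronglyMeasurable
    obtain ⟨B, hB, rfl⟩ := hs
    set g : (Fin d → ℝ) → ℝ := B.indicator (fun _ => (1:ℝ)) with hgdef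
    have hgm : Measurable g := measurable_const.indicator hB
    have hgbd : ∀ u, |g u| ≤ 1 := fun u => by
      by_cases hu : u ∈ B <;> simp [hgdef, Set.indicator_apply, hu]
    have h1 := key g hgm 1 hgbd (Fin.last (k+1))
    have h2 := H g hgm ⟨1, hgbd⟩ (Fin.last (k+1))
    have h3 := h1.unique h2
    have h5 : ∀ ω, ((if Fin.last (k+1) = Fin.last (k+1) then (1:ℝ) else 0) * (g (c ω) * ε ω)
        - φ * (g (c ω) * Q (Fin.last (k+1)) ω)) = (c ⁻¹' B).indicator ε ω := by
      intro ω
      rw [if_pos rfl, hφ0]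
      by_cases hω : c ω ∈ B <;>
        simp [hgdef, Set.indicator_apply, Set.mem_preimage, hω]
    rw [show (∫ ω, ((if Fin.last (k+1) = Fin.last (k+1) then (1:ℝ) else 0) * (g (c ω) * ε ω)
        - φ * (g (c ω) * Q (Fin.last (k+1)) ω)) ∂P) = ∫ ω, (c ⁻¹' B).indicator ε ω ∂P from
        integral_congr_ae (ae_of_all _ h5), integral_indicator (hc hB)] at h3
    rw [h3]
    simp
  -- backward implication
  have bwd : (φ = 0 ∧ P[ε | MeasurableSpace.comap c inferInstance] =ᵐ[P] 0) →
      (∀ h : (Fin d → ℝ) → ℝ, Measurable h → (∃ M, ∀ u, |h u| ≤ M) →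
      ∀ i : Fin (k + 2),
        HasDerivAt
          (fun s : ℝ => ∫ ω, consR (z ω) (snocR (ρ (c ω)) (ζ0 (c ω) + s * h (c ω))) i *
            (y ω - ∑ j, consR (t ω) (snocR (ρ (c ω)) (ζ0 (c ω) + s * h (c ω))) j * β0s j) ∂P)
          0 0) := by
    rintro ⟨hφ0, hce⟩ h hhm ⟨M, hM⟩ i
    have K := key h hhm M hM i
    have hval : (∫ ω, ((if i = Fin.last (k+1) then (1:ℝ) else 0) * (h (c ω) * ε ω)
        - φ * (h (c ω) * Q i ω)) ∂P) = 0 := by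
      have hint : ∀ ω, ((if i = Fin.last (k+1) then (1:ℝ) else 0) * (h (c ω) * ε ω)
          - φ * (h (c ω) * Q i ω))
          = (if i = Fin.last (k+1) then (1:ℝ) else 0) * (h (c ω) * ε ω) := by
        intro ω; rw [hφ0]; ring
      rw [show (∫ ω, ((if i = Fin.last (k+1) then (1:ℝ) else 0) * (h (c ω) * ε ω)
          - φ * (h (c ω) * Q i ω)) ∂P)
          = ∫ ω, (if i = Fin.last (k+1) then (1:ℝ) else 0) * (h (c ω) * ε ω) ∂P from
          integral_congr_ae (ae_of_all _ hint)]
      by_cases hi : i = Fin.last (k+1)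
      · subst hi
        rw [if_pos (rfl : Fin.last (k+1) = Fin.last (k+1))]
        simp only [one_mul]
        have hhc : Measurable (fun ω => h (c ω)) := hhm.comp hc
        have hsm : StronglyMeasurable[MeasurableSpace.comap c inferInstance]
            (fun ω => h (c ω)) :=
          (hhm.comp (measurable_iff_comap_le.mpr le_rfl)).stronglyMeasurable
        have hmul : Integrable (fun ω => h (c ω) * ε ω) P :=
          hεint.bdd_mul hhc.aestronglyMeasurable
            (ae_of_all _ fun ω => by rw [Real.norm_eq_abs]; exact hM _)
        have hpull : P[fun ω => h (c ω) * ε ω | MeasurableSpace.comap c inferInstance]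
            =ᵐ[P] fun ω => h (c ω) * (P[ε | MeasurableSpace.comap c inferInstance]) ω :=
          condExp_mul_of_stronglyMeasurable_left hsm hmul hεint
        have hzero : P[fun ω => h (c ω) * ε ω | MeasurableSpace.comap c inferInstance]
            =ᵐ[P] (0 : Ω → ℝ) := by
          refine hpull.trans ?_
          filter_upwards [hce] with ω hω
          simp [hω]
        rw [← integral_condExp hm, integral_congr_ae hzero]
        simp
      · simp only [if_neg hi, zero_mul, integral_zero]
    rw [hval] at K
    exact K
  exact ⟨⟨fwd, bwd⟩, fun hφ Hall => hφ ((fwd Hall).1)⟩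
end

section
/- Cov(z − ζ₀(c), y) = E[ζ₀(c)(1 − ζ₀(c)) · (y(1) − y(0)) · 1{t(1) > t(0)}] and Cov(z − ζ₀(c), t) = E[ζ₀(c)(1 − ζ₀(c)) · 1{t(1) > t(0)}]. Consequently, if E[ζ₀(c)(1 − ζ₀(c)) · 1{t(1) > t(0)}] ≠ 0, then the instrument-residual estimand satisfies Cov(z − ζ₀(c), y)/Cov(z − ζ₀(c), t) = E[ζ₀(c)(1 − ζ₀(c)) · (y(1) − y(0)) · 1{t(1) > t(0)}] / E[ζ₀(c)(1 − ζ₀(c)) · 1{t(1) > t(0)}], a weighted average of complier treatment effects. -/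
open MeasureTheory ProbabilityTheory Filter
open scoped BigOperators

lemma binary_eq_indicator {Ω : Type*} {z : Ω → ℝ} (hzbin : ∀ ω, z ω = 0 ∨ z ω = 1) :
    z = (z ⁻¹' {1}).indicator (fun _ => (1 : ℝ)) := by
  funext ω
  rcases hzbin ω with h | h
  · rw [Set.indicator_of_notMem, h]
    simp [Set.mem_preimage, h]
  · rw [Set.indicator_of_mem, h]
    simp [Set.mem_preimage, h]

lemma condexp_sup_comap_of_condIndepFun
    {Ω β : Type*} {m : MeasurableSpace Ω} [mΩ : MeasurableSpace Ω] [StandardBorelSpace Ω]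
    [mβ : MeasurableSpace β]
    (hm : m ≤ mΩ) {P : Measure Ω} [IsProbabilityMeasure P]
    {q : Ω → β} (hq : Measurable q)
    {z : Ω → ℝ} (hz : Measurable z) (hzbin : ∀ ω, z ω = 0 ∨ z ω = 1)
    (hCI : CondIndepFun m hm q z P) :
    P[z | m ⊔ MeasurableSpace.comap q mβ] =ᵐ[P] P[z | m] := by
  have hmqle : MeasurableSpace.comap q mβ ≤ mΩ := hq.comap_le
  have hG : m ⊔ MeasurableSpace.comap q mβ ≤ mΩ := sup_le hm hmqle
  have hzint : Integrable z P := by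
    refine (integrable_const (1 : ℝ)).mono' hz.aestronglyMeasurable ?_
    refine Eventually.of_forall fun ω => ?_
    rcases hzbin ω with h | h <;> simp [h]
  have hζint : Integrable (P[z | m]) P := integrable_condExp
  have hprod := (condIndepFun_iff_condExp_inter_preimage_eq_mul hq hz).mp hCI
  have hSmeas : MeasurableSet[mΩ] (z ⁻¹' {1}) := hz (measurableSet_singleton 1)
  have hz_ind : z = (z ⁻¹' {1}).indicator (fun _ => (1 : ℝ)) := binary_eq_indicator hzbin
  have hζS : P[z | m] = P[(z ⁻¹' {1}).indicator (fun _ => (1 : ℝ)) | m] := by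
    rw [← hz_ind]
  have hπ_pi : IsPiSystem {A : Set Ω | ∃ s, MeasurableSet[m] s ∧
      ∃ u, MeasurableSet[MeasurableSpace.comap q mβ] u ∧ A = s ∩ u} := by
    rintro A ⟨s, hs, u, hu, rfl⟩ B ⟨s', hs', u', hu', rfl⟩ -
    refine ⟨s ∩ s', hs.inter hs', u ∩ u', hu.inter hu', ?_⟩
    ext ω; simp only [Set.mem_inter_iff]; tauto
  have hgen : (m ⊔ MeasurableSpace.comap q mβ) = MeasurableSpace.generateFrom
      {A : Set Ω | ∃ s, MeasurableSet[m] s ∧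
        ∃ u, MeasurableSet[MeasurableSpace.comap q mβ] u ∧ A = s ∩ u} := by
    refine le_antisymm (sup_le ?_ ?_) (MeasurableSpace.generateFrom_le ?_)
    · exact fun s hs => MeasurableSpace.measurableSet_generateFrom
        ⟨s, hs, Set.univ, MeasurableSet.univ, (Set.inter_univ s).symm⟩
    · exact fun u hu => MeasurableSpace.measurableSet_generateFrom
        ⟨Set.univ, MeasurableSet.univ, u, hu, (Set.univ_inter u).symm⟩
    · rintro A ⟨s, hs, u, hu, rfl⟩
      exact MeasurableSet.inter
        ((le_sup_left : m ≤ m ⊔ MeasurableSpace.comap q mβ) s hs)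
        ((le_sup_right : MeasurableSpace.comap q mβ ≤ m ⊔ MeasurableSpace.comap q mβ) u hu)
  have hsets : ∀ A, MeasurableSet[m ⊔ MeasurableSpace.comap q mβ] A →
      ∫ x in A, (P[z | m]) x ∂P = ∫ x in A, z x ∂P := by
    refine fun A hA => @MeasurableSpace.induction_on_inter Ω
      (m ⊔ MeasurableSpace.comap q mβ)
      (fun A _ => ∫ x in A, (P[z | m]) x ∂P = ∫ x in A, z x ∂P) _ hgen hπ_pi (by simp) ?_ ?_ ?_ A hA
    · -- basic
      rintro A ⟨s, hs, u, hu, rfl⟩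
      obtain ⟨v, hv, rfl⟩ := hu
      have hu_meas : MeasurableSet[mΩ] (q ⁻¹' v) := hq hv
      have hind_int : Integrable ((q ⁻¹' v ∩ z ⁻¹' {1}).indicator fun _ => (1 : ℝ)) P :=
        (integrable_const (1 : ℝ)).indicator (hu_meas.inter hSmeas)
      have hindu_int : Integrable ((q ⁻¹' v).indicator fun _ => (1 : ℝ)) P :=
        (integrable_const (1 : ℝ)).indicator hu_meas
      have hgint : Integrable (fun x => (P[z|m]) x * (q ⁻¹' v).indicator (fun _ => (1:ℝ)) x) P := by
        refine (hζint.bdd_mul (c := 1) hindu_int.aestronglyMeasurable ?_).congr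
          (Eventually.of_forall fun x => mul_comm _ _)
        refine Eventually.of_forall fun x => ?_
        by_cases hx : x ∈ q ⁻¹' v <;> simp [hx]
      have hb1 : ∫ x in s ∩ q ⁻¹' v, z x ∂P
          = ∫ x in s, (P[(q ⁻¹' v ∩ z ⁻¹' {1}).indicator (fun _ => (1 : ℝ)) | m]) x ∂P := by
        rw [setIntegral_condExp hm hind_int hs,
          setIntegral_indicator (hu_meas.inter hSmeas)]
        conv_lhs => rw [hz_ind]
        rw [setIntegral_indicator hSmeas, Set.inter_assoc]
      have hb2 : ∫ x in s ∩ q ⁻¹' v, (P[z | m]) x ∂P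
          = ∫ x in s, (P[z|m]) x * (q ⁻¹' v).indicator (fun _ => (1:ℝ)) x ∂P := by
        rw [← setIntegral_indicator hu_meas]
        refine setIntegral_congr_ae (hm s hs) (Eventually.of_forall fun x _ => ?_)
        by_cases hx : x ∈ q ⁻¹' v <;> simp [hx]
      have hb4 : P[(fun x => (P[z|m]) x * (q ⁻¹' v).indicator (fun _ => (1:ℝ)) x) | m]
          =ᵐ[P] fun x => (P[z|m]) x * (P[(q ⁻¹' v).indicator (fun _ => (1:ℝ)) | m]) x :=
        condExp_mul_of_stronglyMeasurable_left stronglyMeasurable_condExp hgint hindu_int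
      have hp := hprod v {1} hv (measurableSet_singleton 1)
      calc ∫ x in s ∩ q ⁻¹' v, (P[z | m]) x ∂P
          = ∫ x in s, (P[z|m]) x * (q ⁻¹' v).indicator (fun _ => (1:ℝ)) x ∂P := hb2
        _ = ∫ x in s, (P[(fun x => (P[z|m]) x * (q ⁻¹' v).indicator (fun _ => (1:ℝ)) x) | m]) x ∂P :=
            (setIntegral_condExp hm hgint hs).symm
        _ = ∫ x in s, (P[(q ⁻¹' v ∩ z ⁻¹' {1}).indicator (fun _ => (1 : ℝ)) | m]) x ∂P := by
            refine setIntegral_congr_ae (hm s hs) ?_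
            filter_upwards [hb4, hp] with x hx1 hx2 _
            rw [hx1, hζS, hx2, mul_comm]
        _ = ∫ x in s ∩ q ⁻¹' v, z x ∂P := hb1.symm
    · -- compl
      intro A hA ih
      have hAm : MeasurableSet[mΩ] A := hG A hA
      have h1 := integral_add_compl hAm hζint
      have h2 := integral_add_compl hAm hzint
      have h3 : ∫ x, (P[z | m]) x ∂P = ∫ x, z x ∂P := integral_condExp hm
      linarith
    · -- iUnion
      intro f hdisj hfmeas ihs
      have hfm : ∀ i, MeasurableSet[mΩ] (f i) := fun i => hG _ (hfmeas i)
      rw [integral_iUnion hfm hdisj hζint.integrableOn,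
        integral_iUnion hfm hdisj hzint.integrableOn]
      exact tsum_congr ihs
  refine (ae_eq_condExp_of_forall_setIntegral_eq hG hzint
    (fun s _ _ => hζint.integrableOn) (fun s hs _ => hsets s hs) ?_).symm
  exact ⟨P[z|m], stronglyMeasurable_condExp.mono le_sup_left, EventuallyEq.rfl⟩

/-- `Cov(z − ζ₀(c), y) = E[ζ₀(c)(1 − ζ₀(c))(y(1) − y(0)) 1{t(1) > t(0)}]`
and `Cov(z − ζ₀(c), t) = E[ζ₀(c)(1 − ζ₀(c)) 1{t(1) > t(0)}]`; consequently, when the latter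
is nonzero, the instrument-residual estimand is the corresponding weighted average of
complier treatment effects. -/
theorem stmt13
    {d : ℕ} {Ω : Type*} [MeasurableSpace Ω] [StandardBorelSpace Ω]
    (P : Measure Ω) [IsProbabilityMeasure P]
    (z t0 t1 t : Ω → ℝ) (y0 y1 y : Ω → ℝ) (c : Ω → Fin d → ℝ)
    (hz : Measurable z) (ht0 : Measurable t0) (ht1 : Measurable t1)
    (hy0 : Measurable y0) (hy1 : Measurable y1) (hc : Measurable c)
    (hzbin : ∀ ω, z ω = 0 ∨ z ω = 1)
    (ht0bin : ∀ ω, t0 ω = 0 ∨ t0 ω = 1) (ht1bin : ∀ ω, t1 ω = 0 ∨ t1 ω = 1)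
    (ht_def : ∀ ω, t ω = z ω * t1 ω + (1 - z ω) * t0 ω)
    (hy_def : ∀ ω, y ω = t ω * y1 ω + (1 - t ω) * y0 ω)
    (hy0int : Integrable y0 P) (hy1int : Integrable y1 P)
    (hy0sq : Integrable (fun ω => (y0 ω) ^ 2) P)
    (hy1sq : Integrable (fun ω => (y1 ω) ^ 2) P)
    (hCI : CondIndepFun (MeasurableSpace.comap c inferInstance) hc.comap_le
      (fun ω => (y0 ω, y1 ω, t0 ω, t1 ω)) z P)
    (hmono : ∀ᵐ ω ∂P, t0 ω ≤ t1 ω) :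
    covR P (fun ω => z ω - (P[z | MeasurableSpace.comap c inferInstance]) ω) y
      = ∫ ω, (P[z | MeasurableSpace.comap c inferInstance]) ω *
          (1 - (P[z | MeasurableSpace.comap c inferInstance]) ω) *
          (y1 ω - y0 ω) * (if t0 ω < t1 ω then (1 : ℝ) else 0) ∂P ∧
    covR P (fun ω => z ω - (P[z | MeasurableSpace.comap c inferInstance]) ω) t
      = ∫ ω, (P[z | MeasurableSpace.comap c inferInstance]) ω *
          (1 - (P[z | MeasurableSpace.comap c inferInstance]) ω) *
          (if t0 ω < t1 ω then (1 : ℝ) else 0) ∂P ∧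
    ((∫ ω, (P[z | MeasurableSpace.comap c inferInstance]) ω *
          (1 - (P[z | MeasurableSpace.comap c inferInstance]) ω) *
          (if t0 ω < t1 ω then (1 : ℝ) else 0) ∂P) ≠ 0 →
      covR P (fun ω => z ω - (P[z | MeasurableSpace.comap c inferInstance]) ω) y /
        covR P (fun ω => z ω - (P[z | MeasurableSpace.comap c inferInstance]) ω) t
      = (∫ ω, (P[z | MeasurableSpace.comap c inferInstance]) ω *
            (1 - (P[z | MeasurableSpace.comap c inferInstance]) ω) *
            (y1 ω - y0 ω) * (if t0 ω < t1 ω then (1 : ℝ) else 0) ∂P) /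
        (∫ ω, (P[z | MeasurableSpace.comap c inferInstance]) ω *
            (1 - (P[z | MeasurableSpace.comap c inferInstance]) ω) *
            (if t0 ω < t1 ω then (1 : ℝ) else 0) ∂P)) := by
  set q : Ω → ℝ × ℝ × ℝ × ℝ := fun ω => (y0 ω, y1 ω, t0 ω, t1 ω) with hq_def
  have hq : Measurable q := (hy0.prodMk (hy1.prodMk (ht0.prodMk ht1)))
  set ζ : Ω → ℝ := P[z | MeasurableSpace.comap c inferInstance] with hζ_def
  have hG2 : MeasurableSpace.comap c inferInstance ⊔ MeasurableSpace.comap q inferInstance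
      ≤ ‹MeasurableSpace Ω› := sup_le hc.comap_le hq.comap_le
  have hzint : Integrable z P := by
    refine (integrable_const (1 : ℝ)).mono' hz.aestronglyMeasurable ?_
    refine Eventually.of_forall fun ω => ?_
    rcases hzbin ω with h | h <;> simp [h]
  have hζint : Integrable ζ P := integrable_condExp
  have hζaes : AEStronglyMeasurable ζ P :=
    (stronglyMeasurable_condExp.mono hc.comap_le).aestronglyMeasurable
  have hzbd : ∀ ω, ‖z ω‖ ≤ 1 := fun ω => by rcases hzbin ω with h | h <;> simp [h]
  have hζ0 : (0 : Ω → ℝ) ≤ᵐ[P] ζ := by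
    rw [hζ_def]
    exact condExp_nonneg (Eventually.of_forall fun ω => by
      rcases hzbin ω with h | h <;> simp [h])
  have hζ1 : ζ ≤ᵐ[P] (fun _ => (1 : ℝ)) := by
    rw [hζ_def]
    have h := condExp_mono (m := MeasurableSpace.comap c inferInstance) hzint
      (integrable_const (1 : ℝ))
      (Eventually.of_forall fun ω => by rcases hzbin ω with h | h <;> simp [h])
    rwa [condExp_const hc.comap_le] at h
  have hζbd : ∀ᵐ ω ∂P, ‖ζ ω‖ ≤ 1 := by
    filter_upwards [hζ0, hζ1] with ω h0 h1
    simp only [Pi.zero_apply] at h0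
    rw [Real.norm_eq_abs, abs_le]
    exact ⟨by linarith, h1⟩
  have h1ζbd : ∀ᵐ ω ∂P, ‖1 - ζ ω‖ ≤ 1 := by
    filter_upwards [hζ0, hζ1] with ω h0 h1
    simp only [Pi.zero_apply] at h0
    rw [Real.norm_eq_abs, abs_le]
    constructor <;> [linarith; linarith]
  -- conditional expectation given the big σ-algebra
  have hkey0 : P[z | MeasurableSpace.comap c inferInstance ⊔ MeasurableSpace.comap q inferInstance]
      =ᵐ[P] ζ := by
    rw [hζ_def]
    exact condexp_sup_comap_of_condIndepFun hc.comap_le hq hz hzbin hCI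
  -- the key integral identity
  have key : ∀ W : Ω → ℝ,
      StronglyMeasurable[MeasurableSpace.comap c inferInstance ⊔
        MeasurableSpace.comap q inferInstance] W →
      Integrable W P → Integrable (fun ω => z ω * W ω) P →
      ∫ ω, z ω * W ω ∂P = ∫ ω, ζ ω * W ω ∂P := by
    intro W hWsm hWint hzW
    have hWz : Integrable (W * z) P :=
      hzW.congr (Eventually.of_forall fun ω => mul_comm _ _)
    have h2 : P[W * z | MeasurableSpace.comap c inferInstance ⊔
        MeasurableSpace.comap q inferInstance]
        =ᵐ[P] W * P[z | MeasurableSpace.comap c inferInstance ⊔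
          MeasurableSpace.comap q inferInstance] :=
      condExp_mul_of_stronglyMeasurable_left hWsm hWz hzint
    calc ∫ ω, z ω * W ω ∂P = ∫ ω, (W * z) ω ∂P :=
          integral_congr_ae (Eventually.of_forall fun ω => mul_comm _ _)
      _ = ∫ ω, (P[W * z | MeasurableSpace.comap c inferInstance ⊔
            MeasurableSpace.comap q inferInstance]) ω ∂P := (integral_condExp hG2).symm
      _ = ∫ ω, ζ ω * W ω ∂P := by
          refine integral_congr_ae ?_
          filter_upwards [h2, hkey0] with ω h2ω hω
          rw [h2ω, Pi.mul_apply, hω, mul_comm]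
  -- measurability w.r.t. the big σ-algebra
  have hqm : Measurable[MeasurableSpace.comap q inferInstance] q :=
    Measurable.of_comap_le le_rfl
  have hy0mq : Measurable[MeasurableSpace.comap q inferInstance] y0 := by
    have h : Measurable[MeasurableSpace.comap q inferInstance] (fun ω => (q ω).1) :=
      measurable_fst.comp hqm
    exact h
  have hy1mq : Measurable[MeasurableSpace.comap q inferInstance] y1 := by
    have h : Measurable[MeasurableSpace.comap q inferInstance] (fun ω => (q ω).2.1) :=
      measurable_fst.comp (measurable_snd.comp hqm)
    exact h
  have ht0mq : Measurable[MeasurableSpace.comap q inferInstance] t0 := by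
    have h : Measurable[MeasurableSpace.comap q inferInstance] (fun ω => (q ω).2.2.1) :=
      measurable_fst.comp (measurable_snd.comp (measurable_snd.comp hqm))
    exact h
  have ht1mq : Measurable[MeasurableSpace.comap q inferInstance] t1 := by
    have h : Measurable[MeasurableSpace.comap q inferInstance] (fun ω => (q ω).2.2.2) :=
      measurable_snd.comp (measurable_snd.comp (measurable_snd.comp hqm))
    exact h
  have hy0G : StronglyMeasurable[MeasurableSpace.comap c inferInstance ⊔
      MeasurableSpace.comap q inferInstance] y0 :=
    (hy0mq.mono (le_sup_right : MeasurableSpace.comap q inferInstance ≤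
      MeasurableSpace.comap c inferInstance ⊔ MeasurableSpace.comap q inferInstance)
      le_rfl).stronglyMeasurable
  have hy1G : StronglyMeasurable[MeasurableSpace.comap c inferInstance ⊔
      MeasurableSpace.comap q inferInstance] y1 :=
    (hy1mq.mono (le_sup_right : MeasurableSpace.comap q inferInstance ≤
      MeasurableSpace.comap c inferInstance ⊔ MeasurableSpace.comap q inferInstance)
      le_rfl).stronglyMeasurable
  have ht0G : StronglyMeasurable[MeasurableSpace.comap c inferInstance ⊔
      MeasurableSpace.comap q inferInstance] t0 :=
    (ht0mq.mono (le_sup_right : MeasurableSpace.comap q inferInstance ≤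
      MeasurableSpace.comap c inferInstance ⊔ MeasurableSpace.comap q inferInstance)
      le_rfl).stronglyMeasurable
  have ht1G : StronglyMeasurable[MeasurableSpace.comap c inferInstance ⊔
      MeasurableSpace.comap q inferInstance] t1 :=
    (ht1mq.mono (le_sup_right : MeasurableSpace.comap q inferInstance ≤
      MeasurableSpace.comap c inferInstance ⊔ MeasurableSpace.comap q inferInstance)
      le_rfl).stronglyMeasurable
  have hζG : StronglyMeasurable[MeasurableSpace.comap c inferInstance ⊔
      MeasurableSpace.comap q inferInstance] ζ := by
    rw [hζ_def]; exact stronglyMeasurable_condExp.mono le_sup_left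
  -- integrability facts
  have ht0bd : ∀ ω, ‖t0 ω‖ ≤ 1 := fun ω => by rcases ht0bin ω with h | h <;> simp [h]
  have ht1bd : ∀ ω, ‖t1 ω‖ ≤ 1 := fun ω => by rcases ht1bin ω with h | h <;> simp [h]
  have htd_bd : ∀ ω, ‖t1 ω - t0 ω‖ ≤ 1 := fun ω => by
    rcases ht0bin ω with h | h <;> rcases ht1bin ω with h' | h' <;> simp [h, h']
  have hy10int : Integrable (fun ω => y1 ω - y0 ω) P := hy1int.sub hy0int
  have hAint : Integrable (fun ω => y0 ω + t0 ω * (y1 ω - y0 ω)) P :=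
    hy0int.add (hy10int.bdd_mul ht0.aestronglyMeasurable (Eventually.of_forall ht0bd))
  have hBint : Integrable (fun ω => (t1 ω - t0 ω) * (y1 ω - y0 ω)) P :=
    hy10int.bdd_mul (ht1.sub ht0).aestronglyMeasurable (Eventually.of_forall htd_bd)
  have hW2int : Integrable (fun ω => (1 - ζ ω) * ((t1 ω - t0 ω) * (y1 ω - y0 ω))) P :=
    hBint.bdd_mul (aestronglyMeasurable_const.sub hζaes) h1ζbd
  have hzAint : Integrable (fun ω => z ω * (y0 ω + t0 ω * (y1 ω - y0 ω))) P :=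
    hAint.bdd_mul hz.aestronglyMeasurable (Eventually.of_forall hzbd)
  have hζAint : Integrable (fun ω => ζ ω * (y0 ω + t0 ω * (y1 ω - y0 ω))) P :=
    hAint.bdd_mul hζaes hζbd
  have hzW2int : Integrable (fun ω => z ω * ((1 - ζ ω) * ((t1 ω - t0 ω) * (y1 ω - y0 ω)))) P :=
    hW2int.bdd_mul hz.aestronglyMeasurable (Eventually.of_forall hzbd)
  have ht0int : Integrable t0 P :=
    (integrable_const (1 : ℝ)).mono' ht0.aestronglyMeasurable (Eventually.of_forall ht0bd)
  have ht1int : Integrable t1 P :=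
    (integrable_const (1 : ℝ)).mono' ht1.aestronglyMeasurable (Eventually.of_forall ht1bd)
  have htdint : Integrable (fun ω => t1 ω - t0 ω) P := ht1int.sub ht0int
  have hW2tint : Integrable (fun ω => (1 - ζ ω) * (t1 ω - t0 ω)) P :=
    htdint.bdd_mul (aestronglyMeasurable_const.sub hζaes) h1ζbd
  have hzt0int : Integrable (fun ω => z ω * t0 ω) P :=
    ht0int.bdd_mul hz.aestronglyMeasurable (Eventually.of_forall hzbd)
  have hζt0int : Integrable (fun ω => ζ ω * t0 ω) P := ht0int.bdd_mul hζaes hζbd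
  have hzW2tint : Integrable (fun ω => z ω * ((1 - ζ ω) * (t1 ω - t0 ω))) P :=
    hW2tint.bdd_mul hz.aestronglyMeasurable (Eventually.of_forall hzbd)
  -- y and t
  have hzsq : ∀ ω, z ω * z ω = z ω := fun ω => by rcases hzbin ω with h | h <;> rw [h] <;> ring
  have hy_eq : ∀ ω, y ω = (y0 ω + t0 ω * (y1 ω - y0 ω))
      + z ω * ((t1 ω - t0 ω) * (y1 ω - y0 ω)) := fun ω => by
    rw [hy_def ω, ht_def ω]; ring
  have hy_int : Integrable y P :=
    ((hAint.add (hBint.bdd_mul hz.aestronglyMeasurable (Eventually.of_forall hzbd))).congr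
      (Eventually.of_forall fun ω => (hy_eq ω).symm))
  have ht_meas : Measurable t := by
    have : t = fun ω => z ω * t1 ω + (1 - z ω) * t0 ω := funext ht_def
    rw [this]
    exact (hz.mul ht1).add ((measurable_const.sub hz).mul ht0)
  have htbd : ∀ ω, ‖t ω‖ ≤ 1 := fun ω => by
    rw [ht_def ω]
    rcases hzbin ω with h | h <;> rcases ht0bin ω with h0 | h0 <;>
      rcases ht1bin ω with h1 | h1 <;> simp [h, h0, h1]
  have ht_int : Integrable t P :=
    (integrable_const (1 : ℝ)).mono' ht_meas.aestronglyMeasurable (Eventually.of_forall htbd)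
  have hzζbd : ∀ᵐ ω ∂P, ‖z ω - ζ ω‖ ≤ 2 := by
    filter_upwards [hζbd] with ω h
    calc ‖z ω - ζ ω‖ ≤ ‖z ω‖ + ‖ζ ω‖ := norm_sub_le _ _
      _ ≤ 2 := by have := hzbd ω; linarith
  have hzy_int : Integrable (fun ω => (z ω - ζ ω) * y ω) P :=
    hy_int.bdd_mul (hz.aestronglyMeasurable.sub hζaes) hzζbd
  have hzt_int : Integrable (fun ω => (z ω - ζ ω) * t ω) P :=
    ht_int.bdd_mul (hz.aestronglyMeasurable.sub hζaes) hzζbd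
  -- mean zero
  have hmean0 : ∫ ω, (z ω - ζ ω) ∂P = 0 := by
    rw [integral_sub hzint hζint, hζ_def, integral_condExp hc.comap_le, sub_self]
  -- covariance reduction
  have hcov : ∀ g : Ω → ℝ, Integrable g P → Integrable (fun ω => (z ω - ζ ω) * g ω) P →
      covR P (fun ω => z ω - ζ ω) g = ∫ ω, (z ω - ζ ω) * g ω ∂P := by
    intro g hg hzg
    unfold covR
    calc (∫ ω, ((z ω - ζ ω) - ∫ ω', (z ω' - ζ ω') ∂P) * (g ω - ∫ ω', g ω' ∂P) ∂P)
        = ∫ ω, ((z ω - ζ ω) * g ω - (∫ ω', g ω' ∂P) * (z ω - ζ ω)) ∂P := by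
          rw [hmean0]
          exact integral_congr_ae (Eventually.of_forall fun ω => by ring)
      _ = (∫ ω, (z ω - ζ ω) * g ω ∂P) - (∫ ω', g ω' ∂P) * ∫ ω, (z ω - ζ ω) ∂P := by
          have hconst : Integrable (fun ω => (∫ ω', g ω' ∂P) * (z ω - ζ ω)) P := by
            exact (hzint.sub hζint).const_mul _
          rw [integral_sub hzg hconst, integral_const_mul]
      _ = ∫ ω, (z ω - ζ ω) * g ω ∂P := by rw [hmean0, mul_zero, sub_zero]
  -- difference as indicator
  have hdiff : ∀ᵐ ω ∂P, t1 ω - t0 ω = (if t0 ω < t1 ω then (1 : ℝ) else 0) := by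
    filter_upwards [hmono] with ω hω
    rcases ht0bin ω with h0 | h0 <;> rcases ht1bin ω with h1 | h1 <;>
      rw [h0, h1] at hω ⊢ <;> simp at hω ⊢ <;> norm_num at hω
  -- key instances
  have keyA := key (fun ω => y0 ω + t0 ω * (y1 ω - y0 ω))
    (hy0G.add (ht0G.mul (hy1G.sub hy0G))) hAint hzAint
  have keyW2 := key (fun ω => (1 - ζ ω) * ((t1 ω - t0 ω) * (y1 ω - y0 ω)))
    ((stronglyMeasurable_const.sub hζG).mul ((ht1G.sub ht0G).mul (hy1G.sub hy0G)))
    hW2int hzW2int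
  have keyAt := key t0 ht0G ht0int hzt0int
  have keyW2t := key (fun ω => (1 - ζ ω) * (t1 ω - t0 ω))
    ((stronglyMeasurable_const.sub hζG).mul (ht1G.sub ht0G)) hW2tint hzW2tint
  -- first identity
  have covY : covR P (fun ω => z ω - ζ ω) y
      = ∫ ω, ζ ω * (1 - ζ ω) * (y1 ω - y0 ω) * (if t0 ω < t1 ω then (1 : ℝ) else 0) ∂P := by
    rw [hcov y hy_int hzy_int]
    have hpt : ∀ ω, (z ω - ζ ω) * y ω
        = (z ω * (y0 ω + t0 ω * (y1 ω - y0 ω)) - ζ ω * (y0 ω + t0 ω * (y1 ω - y0 ω)))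
          + z ω * ((1 - ζ ω) * ((t1 ω - t0 ω) * (y1 ω - y0 ω))) := fun ω => by
      rw [hy_def ω, ht_def ω]
      linear_combination (t1 ω - t0 ω) * (y1 ω - y0 ω) * hzsq ω
    calc ∫ ω, (z ω - ζ ω) * y ω ∂P
        = ∫ ω, ((z ω * (y0 ω + t0 ω * (y1 ω - y0 ω)) - ζ ω * (y0 ω + t0 ω * (y1 ω - y0 ω)))
            + z ω * ((1 - ζ ω) * ((t1 ω - t0 ω) * (y1 ω - y0 ω)))) ∂P :=
          integral_congr_ae (Eventually.of_forall hpt)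
      _ = (∫ ω, (z ω * (y0 ω + t0 ω * (y1 ω - y0 ω))
            - ζ ω * (y0 ω + t0 ω * (y1 ω - y0 ω))) ∂P)
          + ∫ ω, z ω * ((1 - ζ ω) * ((t1 ω - t0 ω) * (y1 ω - y0 ω))) ∂P :=
          integral_add (hzAint.sub hζAint) hzW2int
      _ = ∫ ω, ζ ω * ((1 - ζ ω) * ((t1 ω - t0 ω) * (y1 ω - y0 ω))) ∂P := by
          rw [integral_sub hzAint hζAint, keyA, sub_self, zero_add, keyW2]
      _ = ∫ ω, ζ ω * (1 - ζ ω) * (y1 ω - y0 ω) * (if t0 ω < t1 ω then (1 : ℝ) else 0) ∂P := by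
          refine integral_congr_ae ?_
          filter_upwards [hdiff] with ω h
          rw [h]; ring
  -- second identity
  have covT : covR P (fun ω => z ω - ζ ω) t
      = ∫ ω, ζ ω * (1 - ζ ω) * (if t0 ω < t1 ω then (1 : ℝ) else 0) ∂P := by
    rw [hcov t ht_int hzt_int]
    have hpt : ∀ ω, (z ω - ζ ω) * t ω
        = (z ω * t0 ω - ζ ω * t0 ω) + z ω * ((1 - ζ ω) * (t1 ω - t0 ω)) := fun ω => by
      rw [ht_def ω]
      linear_combination (t1 ω - t0 ω) * hzsq ω
    calc ∫ ω, (z ω - ζ ω) * t ω ∂P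
        = ∫ ω, ((z ω * t0 ω - ζ ω * t0 ω) + z ω * ((1 - ζ ω) * (t1 ω - t0 ω))) ∂P :=
          integral_congr_ae (Eventually.of_forall hpt)
      _ = (∫ ω, (z ω * t0 ω - ζ ω * t0 ω) ∂P)
          + ∫ ω, z ω * ((1 - ζ ω) * (t1 ω - t0 ω)) ∂P :=
          integral_add (hzt0int.sub hζt0int) hzW2tint
      _ = ∫ ω, ζ ω * ((1 - ζ ω) * (t1 ω - t0 ω)) ∂P := by
          rw [integral_sub hzt0int hζt0int, keyAt, sub_self, zero_add, keyW2t]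
      _ = ∫ ω, ζ ω * (1 - ζ ω) * (if t0 ω < t1 ω then (1 : ℝ) else 0) ∂P := by
          refine integral_congr_ae ?_
          filter_upwards [hdiff] with ω h
          rw [h]; ring
  refine ⟨covY, covT, fun _ => ?_⟩
  rw [covY, covT]
end
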